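/- arXiv:1704.06481 — 6 statements merged into one kernel-verified Lean document; each statement's English description precedes it below -/
import Mathlib

section
/- Let m : Σ → X be a countably additive vector measure with values in a Banach space X. For every m-integrable function f, ‖f‖_{L¹(m)} = sup_{A ∈ Σ} ‖∫ f·h_A dm‖_X, where h_A = χ_A − χ_{A^c}. -/
/-!
Dualize the norm: for each `x` in the dual ball, `x (∫ f·h_A dm)` is the difference of the
integrals of `f·h_A` against the positive and negative parts of `x ∘ m`, so it is at most
`∫ |f| d|x ∘ m|`; choosing `A` from a Hahn decomposition of `x ∘ m` and the sign of `f` makes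
`f·h_A = |f|` on the positive set and `-|f|` on the negative one, giving equality.
With `x` norming `∫ f·h_A dm` (Hahn–Banach), the two suprema bound each other.
-/

open MeasureTheory Filter

noncomputable def scal {Ω : Type*} [MeasurableSpace Ω] {X : Type*} [NormedAddCommGroup X]
    [NormedSpace ℝ X] (m : VectorMeasure Ω X) (x : X →L[ℝ] ℝ) : SignedMeasure Ω :=
  m.mapRange x.toLinearMap.toAddMonoidHom x.continuous

noncomputable def sint {Ω : Type*} [MeasurableSpace Ω] (s : SignedMeasure Ω) (f : Ω → ℝ) : ℝ :=
  ∫ ω, f ω ∂s.toJordanDecomposition.posPart - ∫ ω, f ω ∂s.toJordanDecomposition.negPart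

open Classical in
noncomputable def hS {Ω : Type*} (A : Set Ω) : Ω → ℝ := fun ω => if ω ∈ A then (1 : ℝ) else -1

/-- The scalar part of `m`-integrability: integrable w.r.t. every scalarization. -/
def MemL1 {Ω : Type*} [MeasurableSpace Ω] {X : Type*} [NormedAddCommGroup X]
    [NormedSpace ℝ X] (m : VectorMeasure Ω X) (f : Ω → ℝ) : Prop :=
  ∀ x : X →L[ℝ] ℝ, Integrable f (scal m x).totalVariation

noncomputable def l1norm {Ω : Type*} [MeasurableSpace Ω] {X : Type*} [NormedAddCommGroup X]
    [NormedSpace ℝ X] (m : VectorMeasure Ω X) (f : Ω → ℝ) : ℝ :=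
  ⨆ x : {x : X →L[ℝ] ℝ // ‖x‖ ≤ 1}, ∫ ω, |f ω| ∂(scal m x.1).totalVariation

section hS

variable {Ω : Type*} {A : Set Ω} {f : Ω → ℝ} {ω : Ω}

lemma abs_mul_hS : |f ω * hS A ω| = |f ω| := by
  by_cases h : ω ∈ A <;> simp [hS, h]

lemma mul_hS_eq_abs_of_mem_iff (h : ω ∈ A ↔ 0 ≤ f ω) : f ω * hS A ω = |f ω| := by
  by_cases hf : 0 ≤ f ω
  · simp [hS, h.mpr hf, abs_of_nonneg hf]
  · simp [hS, mt h.mp hf, abs_of_neg (not_le.mp hf)]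

lemma mul_hS_eq_neg_abs_of_mem_iff (h : ω ∈ A ↔ f ω < 0) : f ω * hS A ω = -|f ω| := by
  by_cases hf : f ω < 0
  · simp [hS, h.mpr hf, abs_of_neg hf]
  · simp [hS, mt h.mp hf, abs_of_nonneg (not_lt.mp hf)]

lemma abs_integral_mul_hS_le [MeasurableSpace Ω] (μ : Measure Ω) :
    |∫ ω, f ω * hS A ω ∂μ| ≤ ∫ ω, |f ω| ∂μ := by
  simpa only [Real.norm_eq_abs, abs_mul_hS] using
    norm_integral_le_integral_norm (μ := μ) (fun ω => f ω * hS A ω)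

end hS

namespace MeasureTheory.SignedMeasure

open scoped symmDiff

variable {Ω : Type*} [MeasurableSpace Ω] (s : SignedMeasure Ω) {f : Ω → ℝ}

lemma integral_totalVariation (hf : Integrable f s.totalVariation) :
    ∫ ω, f ω ∂s.totalVariation =
      ∫ ω, f ω ∂s.toJordanDecomposition.posPart + ∫ ω, f ω ∂s.toJordanDecomposition.negPart :=
  integral_add_measure (hf.mono_measure (Measure.le_add_right le_rfl))
    (hf.mono_measure (Measure.le_add_left le_rfl))

lemma abs_sint_mul_hS_le (hf : Integrable f s.totalVariation) (A : Set Ω) :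
    |sint s (fun ω => f ω * hS A ω)| ≤ ∫ ω, |f ω| ∂s.totalVariation := by
  rw [integral_totalVariation s hf.abs]
  exact (abs_sub _ _).trans <|
    add_le_add (abs_integral_mul_hS_le _) (abs_integral_mul_hS_le _)

lemma exists_sint_mul_hS_eq_integral_abs (hf : Integrable f s.totalVariation) :
    ∃ A, MeasurableSet A ∧
      sint s (fun ω => f ω * hS A ω) = ∫ ω, |f ω| ∂s.totalVariation := by
  set P := s.toJordanDecomposition.posPart
  set N := s.toJordanDecomposition.negPart
  obtain ⟨u, hu, hPu, hNu⟩ := s.toJordanDecomposition.mutuallySingular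
  obtain ⟨g, hg, hfg⟩ := hf.aestronglyMeasurable
  obtain ⟨hfgP, hfgN⟩ := ae_add_measure_iff.mp hfg
  -- Off `u` the sign of `h_A` is that of `f`, on `u` it is the opposite one.
  refine ⟨{ω | 0 ≤ g ω} ∆ u,
    (measurableSet_le measurable_const hg.measurable).symmDiff hu, ?_⟩
  have hPae : (fun ω => f ω * hS ({ω | 0 ≤ g ω} ∆ u) ω) =ᵐ[P] fun ω => |f ω| := by
    filter_upwards [hfgP, measure_eq_zero_iff_ae_notMem.mp hPu] with ω hω hωu
    exact mul_hS_eq_abs_of_mem_iff (by simp [Set.mem_symmDiff, hωu, hω])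
  have hNae : (fun ω => f ω * hS ({ω | 0 ≤ g ω} ∆ u) ω) =ᵐ[N] fun ω => -|f ω| := by
    filter_upwards [hfgN, measure_eq_zero_iff_ae_notMem.mp hNu] with ω hω hωu
    exact mul_hS_eq_neg_abs_of_mem_iff
      (by simp [Set.mem_symmDiff, Set.notMem_compl_iff.mp hωu, hω, not_le])
  rw [sint, integral_congr_ae hPae, integral_congr_ae hNae, integral_neg, sub_neg_eq_add,
    integral_totalVariation s hf.abs]

end MeasureTheory.SignedMeasure

theorem stmt2_general {Ω X : Type*} [MeasurableSpace Ω] [NormedAddCommGroup X] [NormedSpace ℝ X]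
    (m : VectorMeasure Ω X) (f : Ω → ℝ)
    (hint : MemL1 m f)
    -- `I A = ∫ f·h_A dm`, characterized through the scalarizations of `m`:
    (I : Set Ω → X)
    (hI : ∀ A : Set Ω, MeasurableSet A → ∀ x : X →L[ℝ] ℝ,
      x (I A) = sint (scal m x) (fun ω => f ω * hS A ω)) :
    l1norm m f = ⨆ A : {A : Set Ω // MeasurableSet A}, ‖I A.1‖ := by
  rw [l1norm, iSup, iSup]
  apply csSup_eq_csSup_of_forall_exists_le
  · rintro _ ⟨⟨x, hx⟩, rfl⟩
    obtain ⟨A, hA, hxA⟩ := (scal m x).exists_sint_mul_hS_eq_integral_abs (hint x)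
    refine ⟨_, ⟨⟨A, hA⟩, rfl⟩, ?_⟩
    calc ∫ ω, |f ω| ∂(scal m x).totalVariation = x (I A) := by rw [hI A hA, hxA]
      _ ≤ ‖x‖ * ‖I A‖ := (le_abs_self _).trans (x.le_opNorm _)
      _ ≤ ‖I A‖ := mul_le_of_le_one_left (norm_nonneg _) hx
  · rintro _ ⟨⟨A, hA⟩, rfl⟩
    obtain ⟨x, hx, hxA⟩ := exists_dual_vector'' ℝ (I A)
    refine ⟨_, ⟨⟨x, hx⟩, rfl⟩, ?_⟩
    calc ‖I A‖ = x (I A) := by exact_mod_cast hxA.symm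
      _ ≤ |sint (scal m x) (fun ω => f ω * hS A ω)| := (hI A hA x).le.trans (le_abs_self _)
      _ ≤ _ := (scal m x).abs_sint_mul_hS_le (hint x) A

/-- `‖f‖_{L¹(m)} = sup_{A ∈ Σ} ‖∫ f·h_A dm‖`, where `h_A = χ_A − χ_{Aᶜ}`. -/
theorem stmt2 {Ω X : Type*} [MeasurableSpace Ω] [NormedAddCommGroup X] [NormedSpace ℝ X]
    [CompleteSpace X]
    (m : VectorMeasure Ω X) (f : Ω → ℝ)
    (hint : MemL1 m f)
    -- `I A = ∫ f·h_A dm`, characterized through the scalarizations of `m`: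
    (I : Set Ω → X)
    (hI : ∀ A : Set Ω, MeasurableSet A → ∀ x : X →L[ℝ] ℝ,
      x (I A) = sint (scal m x) (fun ω => f ω * hS A ω)) :
    l1norm m f = ⨆ A : {A : Set Ω // MeasurableSet A}, ‖I A.1‖ :=
  stmt2_general m f hint I hI
end

section
/- Let m and m_η (η in a directed set Λ) be countably additive X-valued vector measures, all absolutely continuous with respect to a finite measure μ, with L¹(m) ⊆ L¹(m_η) with inclusion of norm at most one for each η. If for each x* ∈ X* the Radon–Nikodým derivatives satisfy lim_η d⟨m_η, x*⟩/dμ = d⟨m, x*⟩/dμ in the weak* topology of (L¹(m))' (i.e., ∫ g · d⟨m_η,x*⟩/dμ dμ → ∫ g · d⟨m,x*⟩/dμ dμ for all g ∈ L¹(m)), then lim_η ‖f‖_{L¹(m_η)} = ‖f‖_{L¹(m)} for every f ∈ L¹(m). -/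
open MeasureTheory Filter

/-!
Only the lower bound needs proof. Given `a < ‖f‖_{L¹(m)}`, pick `x*` in the unit ball with
`a < ∫ |f| d|⟨m,x*⟩|`. Since `|⟨m,x*⟩| = |d⟨m,x*⟩/dμ| μ`, a simple minorant of `|f|` multiplied by
the sign of this density is a simple `G` with `|G| ≤ |f|` and `a < ∫ G d⟨m,x*⟩/dμ dμ`. Weak*
convergence carries this inequality to `m_η` for large `η`, and there
`|∫ G d⟨m_η,x*⟩/dμ dμ| ≤ ∫ |f| d|⟨m_η,x*⟩| ≤ ‖f‖_{L¹(m_η)}`.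

The last step needs `‖f‖_{L¹(m_η)}` to be a genuine supremum (`⨆` over an unbounded family of
reals is `0`). This is Banach–Steinhaus: the vectors `∫ G dm_η` with `G` simple and `|G| ≤ |f|`
are weakly bounded, and by the same sign trick they norm the functionals
`x* ↦ ∫ |f| d|⟨m_η,x*⟩|`.
-/

open scoped ENNReal NNReal

theorem exists_norm_le_of_forall_abs_dual_le {ι E : Type*} [NormedAddCommGroup E]
    [NormedSpace ℝ E] (v : ι → E) (h : ∀ x : StrongDual ℝ E, ∃ C, ∀ i, |x (v i)| ≤ C) :
    ∃ C, ∀ i, ‖v i‖ ≤ C := by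
  obtain ⟨C, hC⟩ := banach_steinhaus (g := fun i => NormedSpace.inclusionInDoubleDual ℝ E (v i))
    fun x => by simpa [Real.norm_eq_abs] using h x
  exact ⟨C, fun i => ((NormedSpace.inclusionInDoubleDualLi ℝ).norm_map (v i)).symm.trans_le (hC i)⟩

namespace MeasureTheory

variable {Ω : Type*} [MeasurableSpace Ω]

theorem exists_simpleFunc_le_lt_integral {ν : Measure Ω} {g : Ω → ℝ} (hg0 : 0 ≤ g)
    (hg : Integrable g ν) {c : ℝ} (hc : c < ∫ ω, g ω ∂ν) :
    ∃ G : SimpleFunc Ω ℝ, 0 ≤ G ∧ ⇑G ≤ g ∧ c < ∫ ω, G ω ∂ν := by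
  rcases lt_or_ge c 0 with hc0 | hc0
  · exact ⟨0, le_rfl, fun ω => by simpa using hg0 ω, by simpa using hc0⟩
  have hlt : ENNReal.ofReal c < ∫⁻ ω, ENNReal.ofReal (g ω) ∂ν := by
    rwa [integral_eq_lintegral_of_nonneg_ae (ae_of_all _ hg0) hg.1,
      ← ENNReal.ofReal_lt_iff_lt_toReal hc0 hg.lintegral_lt_top.ne] at hc
  obtain ⟨φ, hφg, hcφ⟩ : ∃ φ : SimpleFunc Ω ℝ≥0, (∀ ω, (φ ω : ℝ≥0∞) ≤ ENNReal.ofReal (g ω)) ∧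
      ENNReal.ofReal c < ∫⁻ ω, φ ω ∂ν := by
    rw [lintegral_eq_nnreal] at hlt
    obtain ⟨φ, hφ⟩ := lt_iSup_iff.1 hlt
    obtain ⟨hφg, hcφ⟩ := lt_iSup_iff.1 hφ
    refine ⟨φ, hφg, ?_⟩
    rwa [← SimpleFunc.lintegral_eq_lintegral, SimpleFunc.coe_map] at hcφ
  have hφfin : ∫⁻ ω, (φ ω : ℝ≥0∞) ∂ν ≠ ∞ :=
    ne_top_of_le_ne_top hg.lintegral_lt_top.ne (lintegral_mono hφg)
  refine ⟨φ.map (↑), fun ω => by simp, fun ω => ?_, ?_⟩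
  · simpa [← ENNReal.ofReal_coe_nnreal, ENNReal.ofReal_le_ofReal_iff (hg0 ω)] using hφg ω
  · rw [integral_eq_lintegral_of_nonneg_ae (ae_of_all _ fun ω => by simp)
      (φ.map _).aestronglyMeasurable, ← ENNReal.ofReal_lt_iff_lt_toReal hc0 (by simpa using hφfin)]
    simpa using hcφ

namespace SignedMeasure

theorem integrable_simpleFunc_mul_rnDeriv (s : SignedMeasure Ω) (μ : Measure Ω)
    (G : SimpleFunc Ω ℝ) : Integrable (fun ω => G ω * s.rnDeriv μ ω) μ := by
  obtain ⟨C, hC⟩ := G.exists_forall_norm_le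
  exact (s.integrable_rnDeriv μ).bdd_mul G.aestronglyMeasurable (ae_of_all _ hC)

variable {s : SignedMeasure Ω} {μ : Measure Ω} [SigmaFinite μ]

theorem setIntegral_rnDeriv (hs : s ≪ᵥ μ.toENNRealVectorMeasure) {A : Set Ω}
    (hA : MeasurableSet A) : ∫ ω in A, s.rnDeriv μ ω ∂μ = s A := by
  rw [← withDensityᵥ_apply (s.integrable_rnDeriv μ) hA, withDensityᵥ_rnDeriv_eq s μ hs]

theorem totalVariation_eq_withDensity_rnDeriv (hs : s ≪ᵥ μ.toENNRealVectorMeasure) :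
    s.totalVariation = μ.withDensity fun ω => (‖s.rnDeriv μ ω‖₊ : ℝ≥0∞) := by
  have hd := s.measurable_rnDeriv μ
  have hJ := toJordanDecomposition_eq_of_eq_add_withDensity hd (s.integrable_rnDeriv μ)
    VectorMeasure.MutuallySingular.zero_left (by rw [zero_add, withDensityᵥ_rnDeriv_eq s μ hs])
  rw [totalVariation, hJ]
  simp only [toJordanDecomposition_zero, JordanDecomposition.zero_posPart,
    JordanDecomposition.zero_negPart, zero_add]
  rw [← withDensity_add_right _ (by exact hd.neg.ennreal_ofReal)]
  congr 1
  funext ω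
  rw [Pi.add_apply, ← enorm_eq_nnnorm, Real.enorm_eq_ofReal_abs]
  rcases le_total 0 (s.rnDeriv μ ω) with h | h
  · rw [ENNReal.ofReal_of_nonpos (neg_nonpos.2 h), add_zero, abs_of_nonneg h]
  · rw [ENNReal.ofReal_of_nonpos h, zero_add, abs_of_nonpos h]

theorem integral_totalVariation_s5 (hs : s ≪ᵥ μ.toENNRealVectorMeasure) (g : Ω → ℝ) :
    ∫ ω, g ω ∂s.totalVariation = ∫ ω, |s.rnDeriv μ ω| * g ω ∂μ := by
  rw [totalVariation_eq_withDensity_rnDeriv hs,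
    integral_withDensity_eq_integral_smul (s.measurable_rnDeriv μ).nnnorm]
  simp [NNReal.smul_def]

theorem integrable_totalVariation_iff (hs : s ≪ᵥ μ.toENNRealVectorMeasure) {g : Ω → ℝ} :
    Integrable g s.totalVariation ↔ Integrable (fun ω => |s.rnDeriv μ ω| * g ω) μ := by
  rw [totalVariation_eq_withDensity_rnDeriv hs,
    integrable_withDensity_iff_integrable_smul (s.measurable_rnDeriv μ).nnnorm]
  simp [NNReal.smul_def]

theorem abs_integral_mul_rnDeriv_le (hs : s ≪ᵥ μ.toENNRealVectorMeasure) {f G : Ω → ℝ}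
    (hf : Integrable f s.totalVariation) (hGf : ∀ ω, |G ω| ≤ |f ω|) :
    |∫ ω, G ω * s.rnDeriv μ ω ∂μ| ≤ ∫ ω, |f ω| ∂s.totalVariation := by
  rw [integral_totalVariation_s5 hs]
  refine (abs_integral_le_integral_abs).trans (integral_mono_of_nonneg (ae_of_all _ fun ω => ?_)
    ((integrable_totalVariation_iff hs).1 hf.abs) (ae_of_all _ fun ω => ?_))
  · exact abs_nonneg _
  · dsimp only
    rw [abs_mul, mul_comm]
    exact mul_le_mul_of_nonneg_left (hGf ω) (abs_nonneg _)

theorem exists_simpleFunc_abs_le_lt_integral_mul_rnDeriv (hs : s ≪ᵥ μ.toENNRealVectorMeasure)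
    {f : Ω → ℝ} (hf : Integrable f s.totalVariation) {c : ℝ}
    (hc : c < ∫ ω, |f ω| ∂s.totalVariation) :
    ∃ G : SimpleFunc Ω ℝ, (∀ ω, |G ω| ≤ |f ω|) ∧ c < ∫ ω, G ω * s.rnDeriv μ ω ∂μ := by
  obtain ⟨G, hG0, hGf, hcG⟩ := exists_simpleFunc_le_lt_integral (fun ω => abs_nonneg (f ω))
    hf.abs hc
  have hB : MeasurableSet {ω | 0 ≤ s.rnDeriv μ ω} :=
    measurableSet_le measurable_const (s.measurable_rnDeriv μ)
  let sign : SimpleFunc Ω ℝ := .piecewise _ hB (.const Ω 1) (.const Ω (-1))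
  have hsign : ∀ ω, (sign * G) ω * s.rnDeriv μ ω = |s.rnDeriv μ ω| * G ω := fun ω => by
    simp only [sign, SimpleFunc.coe_mul, Pi.mul_apply, SimpleFunc.piecewise_apply,
      SimpleFunc.const_apply, Set.mem_ofPred_eq]
    split_ifs with h
    · rw [abs_of_nonneg h]; ring
    · rw [abs_of_neg (not_le.1 h)]; ring
  refine ⟨sign * G, fun ω => ?_, ?_⟩
  · simp only [sign, SimpleFunc.coe_mul, Pi.mul_apply, SimpleFunc.piecewise_apply,
      SimpleFunc.const_apply]
    split_ifs <;> simpa [abs_of_nonneg (hG0 ω)] using hGf ω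
  · rwa [integral_congr_ae (ae_of_all _ hsign), ← integral_totalVariation_s5 hs]

end SignedMeasure

end MeasureTheory

section VectorMeasure

variable {Ω X : Type*} [MeasurableSpace Ω] [NormedAddCommGroup X] [NormedSpace ℝ X]
  {ν : VectorMeasure Ω X} {μ : Measure Ω} [SigmaFinite μ]

theorem MemL1.of_abs_le {f g : Ω → ℝ} (hf : MemL1 ν f) (hg : Measurable g)
    (hgf : ∀ ω, |g ω| ≤ |f ω|) : MemL1 ν g := fun x =>
  (hf x).abs.mono' hg.aestronglyMeasurable (ae_of_all _ hgf)

theorem exists_integral_simpleFunc_mul_rnDeriv_scal_eq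
    (hν : ∀ x : X →L[ℝ] ℝ, scal ν x ≪ᵥ μ.toENNRealVectorMeasure) (G : SimpleFunc Ω ℝ) :
    ∃ v : X, ∀ x : X →L[ℝ] ℝ, ∫ ω, G ω * (scal ν x).rnDeriv μ ω ∂μ = x v := by
  induction G using SimpleFunc.induction with
  | @const c A hA =>
    refine ⟨c • ν A, fun x => ?_⟩
    have hG : ∀ ω, SimpleFunc.piecewise A hA (.const Ω c) (.const Ω 0) ω *
        (scal ν x).rnDeriv μ ω = A.indicator (fun ω => c * (scal ν x).rnDeriv μ ω) ω := fun ω => by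
      by_cases hω : ω ∈ A <;> simp [hω]
    rw [integral_congr_ae (ae_of_all _ hG), integral_indicator hA, integral_const_mul,
      SignedMeasure.setIntegral_rnDeriv (hν x) hA, map_smul, smul_eq_mul]
    rfl
  | @add G₁ G₂ _ h₁ h₂ =>
    obtain ⟨v₁, hv₁⟩ := h₁
    obtain ⟨v₂, hv₂⟩ := h₂
    refine ⟨v₁ + v₂, fun x => ?_⟩
    simp only [SimpleFunc.coe_add, Pi.add_apply, add_mul, map_add, ← hv₁, ← hv₂]
    exact integral_add (SignedMeasure.integrable_simpleFunc_mul_rnDeriv _ μ G₁)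
      (SignedMeasure.integrable_simpleFunc_mul_rnDeriv _ μ G₂)

theorem bddAbove_integral_abs_totalVariation_scal
    (hν : ∀ x : X →L[ℝ] ℝ, scal ν x ≪ᵥ μ.toENNRealVectorMeasure) {f : Ω → ℝ} (hf : MemL1 ν f) :
    BddAbove (Set.range fun x : {x : X →L[ℝ] ℝ // ‖x‖ ≤ 1} =>
      ∫ ω, |f ω| ∂(scal ν x.1).totalVariation) := by
  choose v hv using fun G : {G : SimpleFunc Ω ℝ // ∀ ω, |G ω| ≤ |f ω|} =>
    exists_integral_simpleFunc_mul_rnDeriv_scal_eq hν G.1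
  obtain ⟨C, hC⟩ := exists_norm_le_of_forall_abs_dual_le v fun x =>
    ⟨_, fun G => hv G x ▸ (scal ν x).abs_integral_mul_rnDeriv_le (hν x) (hf x) G.2⟩
  refine ⟨C, Set.forall_mem_range.2 fun ⟨x, hx⟩ => le_of_forall_lt fun c hc => ?_⟩
  obtain ⟨G, hGf, hcG⟩ :=
    (scal ν x).exists_simpleFunc_abs_le_lt_integral_mul_rnDeriv (hν x) (hf x) hc
  calc c < x (v ⟨G, hGf⟩) := hv ⟨G, hGf⟩ x ▸ hcG
    _ ≤ ‖x‖ * ‖v ⟨G, hGf⟩‖ := (le_abs_self _).trans (x.le_opNorm _)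
    _ ≤ ‖v ⟨G, hGf⟩‖ := mul_le_of_le_one_left (norm_nonneg _) hx
    _ ≤ C := hC _

theorem integral_abs_totalVariation_scal_le_l1norm
    (hν : ∀ x : X →L[ℝ] ℝ, scal ν x ≪ᵥ μ.toENNRealVectorMeasure) {f : Ω → ℝ} (hf : MemL1 ν f)
    {x : X →L[ℝ] ℝ} (hx : ‖x‖ ≤ 1) :
    ∫ ω, |f ω| ∂(scal ν x).totalVariation ≤ l1norm ν f :=
  le_ciSup (bddAbove_integral_abs_totalVariation_scal hν hf) ⟨x, hx⟩

end VectorMeasure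

theorem stmt5_general {Ω X : Type*} [MeasurableSpace Ω] [NormedAddCommGroup X] [NormedSpace ℝ X]
    {Λ : Type*} [SemilatticeSup Λ]
    (μ : Measure Ω) [IsFiniteMeasure μ]
    (m : VectorMeasure Ω X) (mη : Λ → VectorMeasure Ω X)
    -- absolute continuity with respect to `μ`:
    (hac : ∀ x : X →L[ℝ] ℝ, scal m x ≪ᵥ μ.toENNRealVectorMeasure)
    (hacη : ∀ η : Λ, ∀ x : X →L[ℝ] ℝ, scal (mη η) x ≪ᵥ μ.toENNRealVectorMeasure)
    -- `L¹(m) ⊆ L¹(m_η)` with inclusion of norm at most one: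
    (hincl : ∀ g : Ω → ℝ, MemL1 m g → ∀ η : Λ,
      MemL1 (mη η) g ∧ l1norm (mη η) g ≤ l1norm m g)
    -- weak* convergence of the Radon–Nikodým derivatives:
    (hweak : ∀ x : X →L[ℝ] ℝ, ∀ g : Ω → ℝ, MemL1 m g →
      Tendsto (fun η : Λ => ∫ ω, g ω * (scal (mη η) x).rnDeriv μ ω ∂μ) atTop
        (nhds (∫ ω, g ω * (scal m x).rnDeriv μ ω ∂μ))) :
    ∀ f : Ω → ℝ, MemL1 m f →
      Tendsto (fun η : Λ => l1norm (mη η) f) atTop (nhds (l1norm m f)) := by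
  intro f hf
  refine tendsto_order.2 ⟨fun a ha => ?_,
    fun a ha => Eventually.of_forall fun η => (hincl f hf η).2.trans_lt ha⟩
  have : Nonempty {x : X →L[ℝ] ℝ // ‖x‖ ≤ 1} := ⟨⟨0, by simp⟩⟩
  obtain ⟨⟨x, hx⟩, hax⟩ := exists_lt_of_lt_ciSup ha
  obtain ⟨G, hGf, hGa⟩ :=
    (scal m x).exists_simpleFunc_abs_le_lt_integral_mul_rnDeriv (hac x) (hf x) hax
  have hG : MemL1 m G := hf.of_abs_le G.measurable hGf
  filter_upwards [(hweak x G hG).eventually (eventually_gt_nhds hGa)] with η hη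
  have hfη := (hincl f hf η).1
  calc a < ∫ ω, G ω * (scal (mη η) x).rnDeriv μ ω ∂μ := hη
    _ ≤ |∫ ω, G ω * (scal (mη η) x).rnDeriv μ ω ∂μ| := le_abs_self _
    _ ≤ ∫ ω, |f ω| ∂(scal (mη η) x).totalVariation :=
      (scal (mη η) x).abs_integral_mul_rnDeriv_le (hacη η x) (hfη x) hGf
    _ ≤ l1norm (mη η) f := integral_abs_totalVariation_scal_le_l1norm (hacη η) hfη hx

/-- if the inclusions `L¹(m) ⊆ L¹(m_η)` have norm at most one and the
Radon–Nikodým derivatives `d⟨m_η,x*⟩/dμ` converge weakly* to `d⟨m,x*⟩/dμ` (against every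
`g ∈ L¹(m)`), then `‖f‖_{L¹(m_η)} → ‖f‖_{L¹(m)}` for every `f ∈ L¹(m)`. -/
theorem stmt5 {Ω X : Type*} [MeasurableSpace Ω] [NormedAddCommGroup X] [NormedSpace ℝ X]
    [CompleteSpace X]
    {Λ : Type*} [SemilatticeSup Λ] [Nonempty Λ]
    (μ : Measure Ω) [IsFiniteMeasure μ]
    (m : VectorMeasure Ω X) (mη : Λ → VectorMeasure Ω X)
    -- absolute continuity with respect to `μ`:
    (hac : ∀ x : X →L[ℝ] ℝ, scal m x ≪ᵥ μ.toENNRealVectorMeasure)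
    (hacη : ∀ η : Λ, ∀ x : X →L[ℝ] ℝ, scal (mη η) x ≪ᵥ μ.toENNRealVectorMeasure)
    -- `L¹(m) ⊆ L¹(m_η)` with inclusion of norm at most one:
    (hincl : ∀ g : Ω → ℝ, MemL1 m g → ∀ η : Λ,
      MemL1 (mη η) g ∧ l1norm (mη η) g ≤ l1norm m g)
    -- weak* convergence of the Radon–Nikodým derivatives:
    (hweak : ∀ x : X →L[ℝ] ℝ, ∀ g : Ω → ℝ, MemL1 m g →
      Tendsto (fun η : Λ => ∫ ω, g ω * (scal (mη η) x).rnDeriv μ ω ∂μ) atTop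
        (nhds (∫ ω, g ω * (scal m x).rnDeriv μ ω ∂μ))) :
    ∀ f : Ω → ℝ, MemL1 m f →
      Tendsto (fun η : Λ => l1norm (mη η) f) atTop (nhds (l1norm m f)) :=
  stmt5_general μ m mη hac hacη hincl hweak
end

section
/- Let m : Σ → X be a countably additive vector measure, and let (P_η) be a net of bounded linear operators P_η : X → X with ‖P_η‖ ≤ 1 for all η, converging pointwise (in the strong operator topology) to the identity on X. Set m_η := P_η ∘ m. Then every m-integrable function f is m_η-integrable and lim_η ‖f‖_{L¹(m_η)} = ‖f‖_{L¹(m)} for all f ∈ L¹(m). -/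
open MeasureTheory Filter

noncomputable def compVM {Ω X Y : Type*} [MeasurableSpace Ω] [NormedAddCommGroup X]
    [NormedSpace ℝ X] [NormedAddCommGroup Y] [NormedSpace ℝ Y]
    (T : X →L[ℝ] Y) (m : VectorMeasure Ω X) : VectorMeasure Ω Y :=
  m.mapRange T.toLinearMap.toAddMonoidHom T.continuous

open scoped ENNReal Topology

/-!
For `y` in the dual unit ball, `∫ |f| d|y ∘ m|` is the supremum of `y (∫ s dm)` over simple `s`
with `|s| ≤ |f|`: take `s ≈ σ |f|`, where the sign `σ` is read off a Hahn decomposition of `y ∘ m`.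
By Hahn–Banach, `‖f‖_{L¹(m)}` is then the supremum of `‖∫ s dm‖` over these `s`, and this family
of vectors is bounded by the uniform boundedness principle on the dual. As
`∫ s d(P_η ∘ m) = P_η (∫ s dm)`, it remains to see that `sup_{v ∈ V} ‖P_η v‖ → sup_{v ∈ V} ‖v‖` for
every bounded `V` when `‖P_η‖ ≤ 1` and `P_η → id` strongly.
-/

theorem tendsto_iSup_norm_of_tendsto {X ι Λ : Type*} [SeminormedAddCommGroup X] [Nonempty ι]
    {l : Filter Λ} {P : Λ → X → X} (hP : ∀ η x, ‖P η x‖ ≤ ‖x‖)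
    (hPx : ∀ x, Tendsto (fun η => P η x) l (𝓝 x)) {v : ι → X}
    (hv : BddAbove (Set.range fun i => ‖v i‖)) :
    Tendsto (fun η => ⨆ i, ‖P η (v i)‖) l (𝓝 (⨆ i, ‖v i‖)) := by
  have hbound : ∀ η i, ‖P η (v i)‖ ≤ ⨆ i, ‖v i‖ := fun η i => (hP η (v i)).trans (le_ciSup hv i)
  refine tendsto_order.2 ⟨fun a ha => ?_, fun b hb => .of_forall fun η =>
    (ciSup_le (hbound η)).trans_lt hb⟩
  obtain ⟨i, hi⟩ := exists_lt_of_lt_ciSup ha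
  filter_upwards [(hPx (v i)).norm.eventually (lt_mem_nhds hi)] with η hη
  exact hη.trans_le (le_ciSup ⟨_, Set.forall_mem_range.2 (hbound η)⟩ i)

section SignedIntegral

variable {Ω : Type*} [MeasurableSpace Ω] (ν : SignedMeasure Ω)

lemma integral_posPart_add_integral_negPart {f : Ω → ℝ} (hf : Integrable f ν.totalVariation) :
    ∫ ω, f ω ∂ν.toJordanDecomposition.posPart + ∫ ω, f ω ∂ν.toJordanDecomposition.negPart =
      ∫ ω, f ω ∂ν.totalVariation :=
  (integral_add_measure hf.left_of_add_measure hf.right_of_add_measure).symm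

lemma abs_sint_le {f : Ω → ℝ} (hf : Integrable f ν.totalVariation) :
    |sint ν f| ≤ ∫ ω, |f ω| ∂ν.totalVariation := by
  rw [← integral_posPart_add_integral_negPart ν hf.abs]
  exact (abs_sub _ _).trans (add_le_add abs_integral_le_integral_abs abs_integral_le_integral_abs)

lemma tendsto_sint_of_dominated_convergence {F : ℕ → Ω → ℝ} {f bound : Ω → ℝ}
    (hF : ∀ n, AEStronglyMeasurable (F n) ν.totalVariation)
    (hbound : Integrable bound ν.totalVariation)
    (hle : ∀ n, ∀ᵐ ω ∂ν.totalVariation, |F n ω| ≤ bound ω)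
    (hlim : ∀ᵐ ω ∂ν.totalVariation, Tendsto (fun n => F n ω) atTop (𝓝 (f ω))) :
    Tendsto (fun n => sint ν (F n)) atTop (𝓝 (sint ν f)) := by
  have key : ∀ μ ≤ ν.totalVariation, Tendsto (fun n => ∫ ω, F n ω ∂μ) atTop (𝓝 (∫ ω, f ω ∂μ)) :=
    fun μ hμ => tendsto_integral_of_dominated_convergence bound (fun n => (hF n).mono_measure hμ)
      (hbound.mono_measure hμ) (fun n => ae_mono hμ (hle n)) (ae_mono hμ hlim)
  exact (key _ (Measure.le_add_right le_rfl)).sub (key _ (Measure.le_add_left le_rfl))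

lemma sint_hS_compl_mul {S : Set Ω} (hpos : ν.toJordanDecomposition.posPart S = 0)
    (hneg : ν.toJordanDecomposition.negPart Sᶜ = 0) {f : Ω → ℝ}
    (hf : Integrable f ν.totalVariation) :
    sint ν (fun ω => hS Sᶜ ω * f ω) = ∫ ω, f ω ∂ν.totalVariation := by
  have hp : ∀ᵐ ω ∂ν.toJordanDecomposition.posPart, hS Sᶜ ω * f ω = f ω := by
    filter_upwards [measure_eq_zero_iff_ae_notMem.1 hpos] with ω hω
    simp [hS, hω]
  have hn : ∀ᵐ ω ∂ν.toJordanDecomposition.negPart, hS Sᶜ ω * f ω = -f ω := by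
    filter_upwards [measure_eq_zero_iff_ae_notMem.1 hneg] with ω hω
    simp [hS, hω]
  rw [sint, integral_congr_ae hp, integral_congr_ae hn, integral_neg, sub_neg_eq_add,
    integral_posPart_add_integral_negPart ν hf]

end SignedIntegral

section Approximation

variable {Ω : Type*} [MeasurableSpace Ω]

lemma MeasureTheory.AEStronglyMeasurable.exists_measurable_abs_le_ae_eq {μ : Measure Ω}
    {f : Ω → ℝ} (hf : AEStronglyMeasurable f μ) :
    ∃ g : Ω → ℝ, Measurable g ∧ (∀ ω, |g ω| ≤ |f ω|) ∧ g =ᵐ[μ] f := by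
  obtain ⟨N, hfN, hN, hμN⟩ := exists_measurable_superset_of_null (ae_iff.1 hf.ae_eq_mk)
  have hfg : ∀ ω ∉ N, f ω = hf.mk f ω := fun ω hω => not_not.1 fun h => hω (hfN h)
  refine ⟨Nᶜ.indicator (hf.mk f), hf.stronglyMeasurable_mk.measurable.indicator hN.compl,
    fun ω => ?_, ?_⟩
  · by_cases hω : ω ∈ N
    · simp [hω]
    · simp [hω, hfg ω hω]
  · filter_upwards [measure_eq_zero_iff_ae_notMem.1 hμN] with ω hω
    simp [hω, hfg ω hω]

lemma Measurable.exists_simpleFunc_abs_le_tendsto {g : Ω → ℝ} (hg : Measurable g) :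
    ∃ s : ℕ → SimpleFunc Ω ℝ,
      (∀ n ω, |s n ω| ≤ |g ω|) ∧ ∀ ω, Tendsto (fun n => s n ω) atTop (𝓝 (g ω)) := by
  set u : Ω → ℝ≥0∞ := fun ω => ENNReal.ofReal |g ω|
  have hu : Measurable u := hg.abs.ennreal_ofReal
  have hlim : ∀ ω, Tendsto (fun n => (SimpleFunc.eapprox u n ω).toReal) atTop (𝓝 |g ω|) :=
    fun ω => by simpa [u, Function.comp_def] using
      (ENNReal.tendsto_toReal ENNReal.ofReal_ne_top).comp (SimpleFunc.tendsto_eapprox hu ω)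
  have hle : ∀ n ω, (SimpleFunc.eapprox u n ω).toReal ≤ |g ω| := fun n ω =>
    ENNReal.toReal_le_of_le_ofReal (abs_nonneg _) <|
      (le_iSup (fun n => SimpleFunc.eapprox u n ω) n).trans_eq (SimpleFunc.iSup_eapprox_apply hu ω)
  set sign : SimpleFunc Ω ℝ := SimpleFunc.piecewise {ω | 0 ≤ g ω}
    (measurableSet_le measurable_const hg) (.const Ω 1) (.const Ω (-1))
  have hsign : ∀ ω, |sign ω| = 1 ∧ sign ω * |g ω| = g ω := fun ω => by
    by_cases h : 0 ≤ g ω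
    · simp [sign, h, abs_of_nonneg h]
    · simp [sign, h, abs_of_neg (not_le.1 h)]
  refine ⟨fun n => sign * (SimpleFunc.eapprox u n).map ENNReal.toReal, fun n ω => ?_, fun ω => ?_⟩
  · simpa [abs_mul, (hsign ω).1] using hle n ω
  · simpa [(hsign ω).2] using (hlim ω).const_mul (sign ω)

lemma exists_simpleFunc_abs_le_tendsto_sint (ν : SignedMeasure Ω) {f : Ω → ℝ}
    (hf : Integrable f ν.totalVariation) :
    ∃ s : ℕ → SimpleFunc Ω ℝ, (∀ n ω, |s n ω| ≤ |f ω|) ∧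
      Tendsto (fun n => sint ν (s n)) atTop (𝓝 (∫ ω, |f ω| ∂ν.totalVariation)) := by
  obtain ⟨g, hg, hgf, hg_ae⟩ := hf.1.exists_measurable_abs_le_ae_eq
  have hg_int : Integrable g ν.totalVariation := hf.congr hg_ae.symm
  obtain ⟨S, hS_meas, hpos, hneg⟩ := ν.toJordanDecomposition.mutuallySingular
  set h : Ω → ℝ := fun ω => hS Sᶜ ω * |g ω|
  have hh : Measurable h :=
    (Measurable.ite hS_meas.compl measurable_const measurable_const).mul hg.abs
  have hh_abs : ∀ ω, |h ω| = |g ω| := fun ω => by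
    by_cases hω : ω ∈ Sᶜ <;> simp [h, hS, hω]
  obtain ⟨s, hs_le, hs_lim⟩ := hh.exists_simpleFunc_abs_le_tendsto
  refine ⟨s, fun n ω => ((hs_le n ω).trans_eq (hh_abs ω)).trans (hgf ω), ?_⟩
  have hgf_int : ∫ ω, |g ω| ∂ν.totalVariation = ∫ ω, |f ω| ∂ν.totalVariation :=
    integral_congr_ae (hg_ae.mono fun ω hω => congrArg abs hω)
  rw [← hgf_int, ← sint_hS_compl_mul ν hpos hneg hg_int.abs]
  exact tendsto_sint_of_dominated_convergence ν (fun n => (s n).aestronglyMeasurable) hg_int.abs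
    (fun n => .of_forall fun ω => (hs_le n ω).trans_eq (hh_abs ω)) (.of_forall hs_lim)

end Approximation

section VectorMeasure

variable {Ω X Y : Type*} [MeasurableSpace Ω] [NormedAddCommGroup X] [NormedSpace ℝ X]
  [NormedAddCommGroup Y] [NormedSpace ℝ Y]

noncomputable def simpleIntegral (m : VectorMeasure Ω X) (s : SimpleFunc Ω ℝ) : X :=
  ∑ c ∈ s.range, c • m (s ⁻¹' {c})

/-- Domination is required everywhere, not almost everywhere: the family must not depend on the
functional `y`, and the total variations of the `y ∘ m` have different null sets. -/
def dominatedSimpleFuncs (f : Ω → ℝ) : Set (SimpleFunc Ω ℝ) :=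
  {s | ∀ ω, |s ω| ≤ |f ω|}

lemma scal_apply (m : VectorMeasure Ω X) (y : X →L[ℝ] ℝ) (A : Set Ω) : scal m y A = y (m A) :=
  VectorMeasure.mapRange_apply _ _

lemma compVM_apply (T : X →L[ℝ] Y) (m : VectorMeasure Ω X) (A : Set Ω) :
    compVM T m A = T (m A) :=
  VectorMeasure.mapRange_apply _ _

lemma scal_compVM (T : X →L[ℝ] Y) (m : VectorMeasure Ω X) (y : Y →L[ℝ] ℝ) :
    scal (compVM T m) y = scal m (y.comp T) := by
  ext A -
  rw [scal_apply, scal_apply, compVM_apply, y.comp_apply]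

lemma memL1_compVM {m : VectorMeasure Ω X} {f : Ω → ℝ} (hf : MemL1 m f) (T : X →L[ℝ] Y) :
    MemL1 (compVM T m) f := fun y => by
  rw [scal_compVM]
  exact hf _

lemma simpleIntegral_compVM (T : X →L[ℝ] Y) (m : VectorMeasure Ω X) (s : SimpleFunc Ω ℝ) :
    simpleIntegral (compVM T m) s = T (simpleIntegral m s) := by
  simp only [simpleIntegral, compVM_apply, map_sum, map_smul]

lemma apply_simpleIntegral (m : VectorMeasure Ω X) (y : X →L[ℝ] ℝ) (s : SimpleFunc Ω ℝ) :
    y (simpleIntegral m s) = sint (scal m y) s := by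
  simp only [sint, ← SimpleFunc.integral_eq_integral _ s.integrable_of_isFiniteMeasure,
    SimpleFunc.integral_eq, simpleIntegral, map_sum, map_smul, ← scal_apply,
    ← Finset.sum_sub_distrib]
  refine Finset.sum_congr rfl fun c _ => ?_
  rw [(scal m y).apply_eq_posPart_real_sub_negPart_real (s.measurableSet_fiber c), smul_eq_mul,
    smul_eq_mul, smul_eq_mul]
  ring

instance (f : Ω → ℝ) : Nonempty (dominatedSimpleFuncs (Ω := Ω) f) := ⟨⟨0, fun ω => by simp⟩⟩

lemma abs_apply_simpleIntegral_le {m : VectorMeasure Ω X} {y : X →L[ℝ] ℝ} {f : Ω → ℝ}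
    (hf : Integrable f (scal m y).totalVariation) {s : SimpleFunc Ω ℝ}
    (hs : s ∈ dominatedSimpleFuncs f) :
    |y (simpleIntegral m s)| ≤ ∫ ω, |f ω| ∂(scal m y).totalVariation := by
  have hs_int : Integrable s (scal m y).totalVariation := s.integrable_of_isFiniteMeasure
  rw [apply_simpleIntegral]
  exact (abs_sint_le _ hs_int).trans (integral_mono hs_int.abs hf.abs hs)

lemma bddAbove_norm_simpleIntegral {m : VectorMeasure Ω X} {f : Ω → ℝ} (hf : MemL1 m f) :
    BddAbove (Set.range fun s : dominatedSimpleFuncs f => ‖simpleIntegral m s‖) := by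
  obtain ⟨C, hC⟩ := banach_steinhaus (g := fun s : dominatedSimpleFuncs f =>
      NormedSpace.inclusionInDoubleDualLi ℝ (simpleIntegral m s))
    fun y => ⟨_, fun s => abs_apply_simpleIntegral_le (hf y) s.2⟩
  exact ⟨C, Set.forall_mem_range.2 fun s =>
    (NormedSpace.inclusionInDoubleDualLi ℝ).norm_map (simpleIntegral m s) ▸ hC s⟩

theorem l1norm_eq_iSup_norm_simpleIntegral {m : VectorMeasure Ω X} {f : Ω → ℝ} (hf : MemL1 m f) :
    l1norm m f = ⨆ s : dominatedSimpleFuncs f, ‖simpleIntegral m s‖ := by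
  set F : (X →L[ℝ] ℝ) → ℝ := fun y => ∫ ω, |f ω| ∂(scal m y).totalVariation
  set B := ⨆ s : dominatedSimpleFuncs f, ‖simpleIntegral m s‖
  have hF : ∀ y : X →L[ℝ] ℝ, ‖y‖ ≤ 1 → F y ≤ B := by
    intro y hy
    obtain ⟨s, hs, hlim⟩ := exists_simpleFunc_abs_le_tendsto_sint _ (hf y)
    refine le_of_tendsto' hlim fun n => ?_
    rw [← apply_simpleIntegral]
    calc y (simpleIntegral m (s n)) ≤ 1 * ‖simpleIntegral m (s n)‖ :=
          (le_abs_self _).trans (y.le_of_opNorm_le hy _)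
      _ ≤ B := (one_mul _).trans_le (le_ciSup (bddAbove_norm_simpleIntegral hf) ⟨s n, hs n⟩)
  have : Nonempty {y : X →L[ℝ] ℝ // ‖y‖ ≤ 1} := ⟨⟨0, by simp⟩⟩
  refine le_antisymm (ciSup_le fun y => hF y.1 y.2) (ciSup_le fun s => ?_)
  obtain ⟨y, hy, hyv⟩ := exists_dual_vector'' ℝ (simpleIntegral m s)
  have hF_bdd : BddAbove (Set.range fun y : {y : X →L[ℝ] ℝ // ‖y‖ ≤ 1} => F y) :=
    ⟨_, Set.forall_mem_range.2 fun y => hF y.1 y.2⟩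
  calc ‖simpleIntegral m s‖ = y (simpleIntegral m s) := hyv.symm
    _ ≤ F y := (le_abs_self _).trans (abs_apply_simpleIntegral_le (hf y) s.2)
    _ ≤ l1norm m f := le_ciSup hF_bdd ⟨y, hy⟩

end VectorMeasure

theorem stmt7_general {Ω X : Type*} [MeasurableSpace Ω] [NormedAddCommGroup X] [NormedSpace ℝ X]
    {Λ : Type*} [SemilatticeSup Λ]
    (m : VectorMeasure Ω X)
    (P : Λ → (X →L[ℝ] X))
    (hnorm : ∀ η : Λ, ‖P η‖ ≤ 1)
    (hconv : ∀ x : X, Tendsto (fun η : Λ => P η x) atTop (nhds x)) :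
    ∀ f : Ω → ℝ, MemL1 m f →
      (∀ η : Λ, MemL1 (compVM (P η) m) f) ∧
      Tendsto (fun η : Λ => l1norm (compVM (P η) m) f) atTop (nhds (l1norm m f)) := by
  intro f hf
  refine ⟨fun η => memL1_compVM hf (P η), ?_⟩
  simp only [l1norm_eq_iSup_norm_simpleIntegral (memL1_compVM hf _),
    l1norm_eq_iSup_norm_simpleIntegral hf, simpleIntegral_compVM]
  exact tendsto_iSup_norm_of_tendsto
    (fun η x => ((P η).le_of_opNorm_le (hnorm η) x).trans_eq (one_mul _)) hconv
    (bddAbove_norm_simpleIntegral hf)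

/-- if `(P_η)` is a net of norm-`≤ 1` operators converging strongly to the
identity and `m_η := P_η ∘ m`, then every `f ∈ L¹(m)` is `m_η`-integrable and
`‖f‖_{L¹(m_η)} → ‖f‖_{L¹(m)}`. -/
theorem stmt7 {Ω X : Type*} [MeasurableSpace Ω] [NormedAddCommGroup X] [NormedSpace ℝ X]
    [CompleteSpace X]
    {Λ : Type*} [SemilatticeSup Λ] [Nonempty Λ]
    (m : VectorMeasure Ω X)
    (P : Λ → (X →L[ℝ] X))
    (hnorm : ∀ η : Λ, ‖P η‖ ≤ 1)
    (hconv : ∀ x : X, Tendsto (fun η : Λ => P η x) atTop (nhds x)) :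
    ∀ f : Ω → ℝ, MemL1 m f →
      (∀ η : Λ, MemL1 (compVM (P η) m) f) ∧
      Tendsto (fun η : Λ => l1norm (compVM (P η) m) f) atTop (nhds (l1norm m f)) :=
  stmt7_general m P hnorm hconv
end

section
/- If a Banach space X has the Daugavet property, then the identity operator on X cannot be written as a pointwise unconditionally convergent series Σ_{n ∈ Γ} T_n of weakly compact operators T_n : X → X. In particular, X has no unconditional basis. -/
/-!
For a weakly compact `S`, the Daugavet property gives `1 + ‖S‖ ≤ ‖Id - S‖`. Take `x₀` with
`‖S x₀‖ ≈ ‖S‖` and a functional `f` norming `S x₀`. The slice form of the Daugavet property yields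
a sequence `xₙ` in the slice `{f ∘ S > ‖S‖ - a}` such that every convex combination of late `xₙ` is
almost antipodal to every normalized convex combination (of norm not too small) of early `S xₙ`.
By Mazur's theorem a weak cluster point `v` of `(S xₙ)` is close both to a combination `c` of early
`S xₙ` and to `S z` for a combination `z` of late `xₙ`; hence `‖z - S z‖ ≈ ‖z - c‖ ≈ 1 + ‖S‖`.

If `Id = ∑ Tₙ` pointwise unconditionally, Banach–Steinhaus bounds the partial sums `S_A`, say by
`c = sup_A ‖S_A‖`, and then also `‖Id - S_A‖ ≤ c`. As `S_A` is weakly compact,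
`1 + ‖S_A‖ ≤ ‖Id - S_A‖ ≤ c` for all `A`, contradicting the choice of `c`. An unconditional basis
would give such a series of rank-one operators.
-/

/-- A Banach space has the Daugavet property if `‖Id + T‖ = 1 + ‖T‖` for every
rank-one operator `T`. -/
def DaugavetProperty (X : Type*) [NormedAddCommGroup X] [NormedSpace ℝ X] : Prop :=
  ∀ (φ : X →L[ℝ] ℝ) (y : X),
    ‖ContinuousLinearMap.id ℝ X + φ.smulRight y‖ = 1 + ‖φ.smulRight y‖

/-- `T` is weakly compact: the image of the closed unit ball is relatively compact in the
weak topology. -/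
def WeaklyCompactOp {X : Type*} [NormedAddCommGroup X] [NormedSpace ℝ X]
    (T : X →L[ℝ] X) : Prop :=
  IsCompact (closure ((toWeakSpaceCLM ℝ X) '' (T '' Metric.closedBall 0 1)))

open Set Filter Topology

theorem exists_seq_of_forall_finite_exists {α : Type*} (P : α → Prop) (r : α → Set α → α → Prop)
    {a₀ : α} (h₀ : P a₀) (h : ∀ a s, P a → s.Finite → ∃ b, P b ∧ r a s b) :
    ∃ f : ℕ → α, f 0 = a₀ ∧ ∀ n, P (f n) ∧ r (f n) (f '' Iic n) (f (n + 1)) := by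
  choose! F hF using h
  -- the current term together with the set of all terms so far
  let st : ℕ → α × Set α := fun n =>
    Nat.rec (a₀, {a₀}) (fun _ p => (F p.1 p.2, insert (F p.1 p.2) p.2)) n
  have hst : ∀ n, (st n).2 = (fun k => (st k).1) '' Iic n ∧ P (st n).1 := by
    intro n
    induction n with
    | zero => exact ⟨by rw [show Iic 0 = {0} by ext; simp, image_singleton]; rfl, h₀⟩
    | succ n ih =>
      refine ⟨?_, (hF _ _ ih.2 (ih.1 ▸ (finite_Iic n).image _)).1⟩
      rw [show Iic (n + 1) = insert (n + 1) (Iic n) by ext k; simp [Nat.le_succ_iff, or_comm],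
        image_insert_eq, ← ih.1]
  refine ⟨fun n => (st n).1, rfl, fun n => ⟨(hst n).2, ?_⟩⟩
  rw [← (hst n).1]
  exact (hF _ _ (hst n).2 ((hst n).1 ▸ (finite_Iic n).image _)).2

lemma exists_mem_convexHull_image_Iic {E : Type*} [AddCommGroup E] [Module ℝ E] {u : ℕ → E}
    {c : E} (hc : c ∈ convexHull ℝ (range u)) : ∃ N, c ∈ convexHull ℝ (u '' Iic N) := by
  have hdir : Directed (· ⊆ ·) fun N => convexHull ℝ (u '' Iic N) :=
    Monotone.directed_le fun m n h => convexHull_mono (image_mono (Iic_subset_Iic.2 h))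
  have hsub : convexHull ℝ (range u) ⊆ ⋃ N, convexHull ℝ (u '' Iic N) :=
    convexHull_min (range_subset_iff.2 fun n =>
        mem_iUnion.2 ⟨n, subset_convexHull ℝ _ ⟨n, mem_Iic.2 le_rfl, rfl⟩⟩)
      (hdir.convex_iUnion fun _ => convex_convexHull ℝ _)
  exact mem_iUnion.1 (hsub hc)

/-- Mazur's theorem applied to a weak cluster point of `u`. -/
lemma exists_forall_mem_closure_convexHull_image_Ici {E : Type*} [NormedAddCommGroup E]
    [NormedSpace ℝ E] {K : Set (WeakSpace ℝ E)} (hK : IsCompact K) {u : ℕ → E}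
    (hu : ∀ n, toWeakSpace ℝ E (u n) ∈ K) :
    ∃ v : E, ∀ m, v ∈ closure (convexHull ℝ (u '' Ici m)) := by
  obtain ⟨v, -, hv⟩ := hK.exists_mapClusterPt (f := atTop) (u := fun n => toWeakSpace ℝ E (u n))
    (tendsto_principal.2 (Eventually.of_forall hu))
  refine ⟨(toWeakSpace ℝ E).symm v, fun m => ?_⟩
  have hmem : v ∈ closure (toWeakSpace ℝ E '' convexHull ℝ (u '' Ici m)) :=
    hv.mem_closure_of_mem _ <| mem_map.2 <| mem_atTop_sets.2
      ⟨m, fun n hn => ⟨u n, subset_convexHull ℝ _ ⟨n, hn, rfl⟩, rfl⟩⟩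
  rw [← (convex_convexHull ℝ _).toWeakSpace_closure ℝ] at hmem
  obtain ⟨c, hc, rfl⟩ := hmem
  rwa [LinearEquiv.symm_apply_apply]

section

variable {X : Type*} [NormedAddCommGroup X] [NormedSpace ℝ X]

def ballSlice (g : X →L[ℝ] ℝ) (β : ℝ) : Set X := Metric.closedBall 0 1 ∩ {x | β < g x}

lemma mem_ballSlice {g : X →L[ℝ] ℝ} {β : ℝ} {x : X} : x ∈ ballSlice g β ↔ ‖x‖ ≤ 1 ∧ β < g x := by
  rw [ballSlice, mem_inter_iff, mem_closedBall_zero_iff]; rfl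

lemma convex_ballSlice (g : X →L[ℝ] ℝ) (β : ℝ) : Convex ℝ (ballSlice g β) :=
  (convex_closedBall 0 1).inter (convex_halfSpace_gt g.isLinear β)

lemma apply_le_opNorm_mul_norm (g : X →L[ℝ] ℝ) (x : X) : g x ≤ ‖g‖ * ‖x‖ :=
  (le_abs_self _).trans (g.le_opNorm x)

lemma apply_le_of_norm_le_one (g : X →L[ℝ] ℝ) {x : X} (hx : ‖x‖ ≤ 1) : g x ≤ ‖g‖ :=
  (apply_le_opNorm_mul_norm g x).trans (mul_le_of_le_one_right (norm_nonneg g) hx)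

lemma ballSlice_nonempty_of_lt_opNorm {g : X →L[ℝ] ℝ} {β : ℝ} (hβ : β < ‖g‖) :
    (ballSlice g β).Nonempty := by
  obtain ⟨x, hx, hgx⟩ := g.exists_lt_apply_of_lt_opNorm hβ
  rw [Real.norm_eq_abs] at hgx
  rcases le_total 0 (g x) with h | h
  · exact ⟨x, mem_ballSlice.2 ⟨hx.le, by rwa [abs_of_nonneg h] at hgx⟩⟩
  · exact ⟨-x, mem_ballSlice.2 ⟨by simpa using hx.le, by rwa [abs_of_nonpos h, ← map_neg] at hgx⟩⟩

lemma lt_opNorm_of_mem_ballSlice {g : X →L[ℝ] ℝ} {β : ℝ} {x : X} (hx : x ∈ ballSlice g β) :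
    β < ‖g‖ :=
  (mem_ballSlice.1 hx).2.trans_le (apply_le_of_norm_le_one g (mem_ballSlice.1 hx).1)

/-- For `‖x‖, ‖y‖ ≤ 1`, a nearly diametral pair `x, y` stays nearly diametral along all
nonnegative combinations. -/
lemma add_sub_mul_max_le_norm_smul_add_smul {x y : X} (hx : ‖x‖ ≤ 1) (hy : ‖y‖ ≤ 1)
    {α β : ℝ} (hα : 0 ≤ α) (hβ : 0 ≤ β) :
    α + β - (2 - ‖x + y‖) * max α β ≤ ‖α • x + β • y‖ := by
  rcases le_total β α with h | h
  · have : α • x + β • y = α • (x + y) - (α - β) • y := by module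
    have key := norm_sub_norm_le (α • (x + y)) ((α - β) • y)
    rw [← this, norm_smul, norm_smul, Real.norm_of_nonneg hα,
      Real.norm_of_nonneg (sub_nonneg.2 h)] at key
    rw [max_eq_left h]
    nlinarith
  · have : α • x + β • y = β • (x + y) - (β - α) • x := by module
    have key := norm_sub_norm_le (β • (x + y)) ((β - α) • x)
    rw [← this, norm_smul, norm_smul, Real.norm_of_nonneg hβ,
      Real.norm_of_nonneg (sub_nonneg.2 h)] at key
    rw [max_eq_right h]
    nlinarith

lemma one_sub_mul_one_add_norm_le_norm_sub {z c : X} (hz : ‖z‖ ≤ 1) (hc : c ≠ 0) {a : ℝ}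
    (ha : 0 ≤ a) (hzc : 2 - a < ‖z - ‖c‖⁻¹ • c‖) : (1 - a) * (1 + ‖c‖) ≤ ‖z - c‖ := by
  have h := add_sub_mul_max_le_norm_smul_add_smul hz
    (show ‖-(‖c‖⁻¹ • c)‖ ≤ 1 by rw [norm_neg]; exact (norm_smul_inv_norm hc).le)
    zero_le_one (norm_nonneg c)
  rw [one_smul, smul_neg, smul_inv_smul₀ (norm_ne_zero_iff.2 hc), ← sub_eq_add_neg,
    ← sub_eq_add_neg] at h
  have hmax : (2 - ‖z - ‖c‖⁻¹ • c‖) * max 1 ‖c‖ ≤ a * (1 + ‖c‖) :=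
    mul_le_mul (by linarith) (max_le (by linarith [norm_nonneg c]) (by linarith))
      (le_max_of_le_left zero_le_one) ha
  linarith

namespace DaugavetProperty

lemma norm_id (hX : DaugavetProperty X) : ‖ContinuousLinearMap.id ℝ X‖ = 1 := by
  simpa using hX 0 0

lemma exists_lt_apply_and_lt_norm_add (hX : DaugavetProperty X) {φ : X →L[ℝ] ℝ} (hφ : ‖φ‖ = 1)
    {y : X} (hy : ‖y‖ = 1) {η : ℝ} (hη : 0 < η) :
    ∃ x, ‖x‖ ≤ 1 ∧ 1 - η < φ x ∧ 2 - 2 * η < ‖x + y‖ := by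
  have hnorm : ‖ContinuousLinearMap.id ℝ X + φ.smulRight y‖ = 2 := by
    rw [hX, ContinuousLinearMap.norm_smulRight_apply, hφ, hy]; norm_num
  obtain ⟨x, hx, hxy⟩ := (ContinuousLinearMap.id ℝ X + φ.smulRight y).exists_lt_apply_of_lt_opNorm
    (show 2 - η < _ by rw [hnorm]; linarith)
  simp only [add_apply, ContinuousLinearMap.id_apply,
    ContinuousLinearMap.smulRight_apply] at hxy
  obtain ⟨x', hx', hφx', hx'y⟩ : ∃ x', ‖x'‖ ≤ 1 ∧ φ x' = |φ x| ∧
      2 - η < ‖x' + φ x' • y‖ := by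
    rcases le_total 0 (φ x) with h | h
    · exact ⟨x, hx.le, (abs_of_nonneg h).symm, hxy⟩
    · refine ⟨-x, by simpa using hx.le, by simp [abs_of_nonpos h], ?_⟩
      rwa [map_neg, neg_smul, ← neg_add, norm_neg]
  have hφle : φ x' ≤ 1 := hφ ▸ apply_le_of_norm_le_one φ hx'
  have habs : 2 - η < 1 + φ x' := by
    calc 2 - η < ‖x' + φ x' • y‖ := hx'y
      _ ≤ ‖x'‖ + ‖φ x' • y‖ := norm_add_le _ _
      _ ≤ 1 + φ x' := by
        rw [norm_smul, hy, mul_one, hφx', Real.norm_eq_abs, abs_abs]; linarith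
  refine ⟨x', hx', by linarith, ?_⟩
  calc 2 - 2 * η < ‖x' + φ x' • y‖ - (1 - φ x') := by linarith
    _ = ‖x' + φ x' • y‖ - ‖(φ x' - 1) • y‖ := by
      rw [norm_smul, hy, mul_one, Real.norm_of_nonpos (by linarith), neg_sub]
    _ ≤ ‖x' + y‖ := by
      rw [sub_le_iff_le_add]
      exact (norm_add_le _ _).trans_eq' (by congr 1; module)

lemma exists_mem_ballSlice_lt_norm_add (hX : DaugavetProperty X) {g : X →L[ℝ] ℝ} {β : ℝ}
    (hne : (ballSlice g β).Nonempty) {y : X} (hy : ‖y‖ = 1) {ε : ℝ} (hε : 0 < ε) :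
    ∃ x ∈ ballSlice g β, 2 - ε < ‖x + y‖ := by
  have hβ : β < ‖g‖ := lt_opNorm_of_mem_ballSlice hne.some_mem
  rcases eq_or_ne g 0 with rfl | hg
  · refine ⟨y, mem_ballSlice.2 ⟨hy.le, by simpa using hβ⟩, ?_⟩
    rw [← two_smul ℝ y, norm_smul, hy]; norm_num; exact hε
  have hg₀ : 0 < ‖g‖ := norm_pos_iff.2 hg
  set η := min (ε / 2) ((‖g‖ - β) / ‖g‖)
  have hη : 0 < η := lt_min (by positivity) (div_pos (by linarith) hg₀)
  have hφ : ‖‖g‖⁻¹ • g‖ = 1 := by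
    rw [norm_smul, norm_inv, norm_norm, inv_mul_cancel₀ hg₀.ne']
  obtain ⟨x, hx, hφx, hxy⟩ := hX.exists_lt_apply_and_lt_norm_add hφ hy hη
  refine ⟨x, mem_ballSlice.2 ⟨hx, ?_⟩, by linarith [min_le_left (ε / 2) ((‖g‖ - β) / ‖g‖)]⟩
  have hηg : ‖g‖ * η ≤ ‖g‖ - β := by
    rw [← le_div_iff₀' hg₀]; exact min_le_right _ _
  have : g x = ‖g‖ * (‖g‖⁻¹ • g) x := by
    rw [smul_apply, smul_eq_mul, mul_inv_cancel_left₀ hg₀.ne']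
  rw [this]
  nlinarith

lemma exists_ballSlice_subset_lt_norm_sub (hX : DaugavetProperty X) {g : X →L[ℝ] ℝ} {β : ℝ}
    (hne : (ballSlice g β).Nonempty) {y : X} (hy : ‖y‖ = 1) {δ : ℝ} (hδ : 0 < δ) :
    ∃ g' β', (ballSlice g' β').Nonempty ∧ ballSlice g' β' ⊆ ballSlice g β ∧
      ∀ z ∈ ballSlice g' β', 2 - δ < ‖z - y‖ := by
  have hβ : β < ‖g‖ := lt_opNorm_of_mem_ballSlice hne.some_mem
  set ρ := min (δ / 4) ((‖g‖ - β) / 3)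
  have hρ : 0 < ρ := lt_min (by positivity) (by linarith)
  have hρδ : ρ ≤ δ / 4 := min_le_left _ _
  have hρβ : ρ ≤ (‖g‖ - β) / 3 := min_le_right _ _
  obtain ⟨x₀, hx₀, hx₀y⟩ := hX.exists_mem_ballSlice_lt_norm_add
    (ballSlice_nonempty_of_lt_opNorm (show ‖g‖ - ρ < ‖g‖ by linarith))
    (show ‖-y‖ = 1 by rwa [norm_neg]) hρ
  rw [← sub_eq_add_neg] at hx₀y
  rw [mem_ballSlice] at hx₀
  -- `u` norms `x₀ - y`; since `‖x₀ - y‖ ≈ 2`, it almost peaks at `x₀` and at `-y`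
  obtain ⟨u, hu, hux₀y⟩ := exists_dual_vector'' ℝ (x₀ - y)
  rw [RCLike.ofReal_real_eq_id, id, map_sub] at hux₀y
  have hux₀ : u x₀ ≤ 1 := (apply_le_of_norm_le_one u hx₀.1).trans hu
  have huy : -u y ≤ 1 := by
    rw [← map_neg]; exact (apply_le_of_norm_le_one u (by rw [norm_neg, hy])).trans hu
  refine ⟨g + u, (g + u) x₀ - ρ, ⟨x₀, mem_ballSlice.2 ⟨hx₀.1, by linarith⟩⟩, ?_, ?_⟩ <;>
    intro z hz <;> rw [mem_ballSlice, add_apply, add_apply] at hz <;> obtain ⟨hz, hgz⟩ := hz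
  · have huz : u z ≤ 1 := (apply_le_of_norm_le_one u hz).trans hu
    exact mem_ballSlice.2 ⟨hz, by linarith⟩
  · have hgz' : g z ≤ ‖g‖ := apply_le_of_norm_le_one g hz
    have huzy : u (z - y) ≤ ‖z - y‖ :=
      (apply_le_opNorm_mul_norm u _).trans (mul_le_of_le_one_left (norm_nonneg _) hu)
    rw [map_sub] at huzy
    linarith

lemma exists_ballSlice_subset_lt_norm_sub_of_finite (hX : DaugavetProperty X) {g : X →L[ℝ] ℝ}
    {β : ℝ} (hne : (ballSlice g β).Nonempty) {t : Set X} (ht : t.Finite) (ht₁ : ∀ y ∈ t, ‖y‖ = 1)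
    {δ : ℝ} (hδ : 0 < δ) :
    ∃ g' β', (ballSlice g' β').Nonempty ∧ ballSlice g' β' ⊆ ballSlice g β ∧
      ∀ z ∈ ballSlice g' β', ∀ y ∈ t, 2 - δ < ‖z - y‖ := by
  induction t, ht using Set.Finite.induction_on generalizing g β with
  | empty => exact ⟨g, β, hne, subset_rfl, by simp⟩
  | @insert y t _ _ ih =>
    obtain ⟨g₁, β₁, hne₁, hsub₁, hfar₁⟩ :=
      ih hne fun y' hy' => ht₁ y' (mem_insert_of_mem y hy')
    obtain ⟨g₂, β₂, hne₂, hsub₂, hfar₂⟩ :=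
      hX.exists_ballSlice_subset_lt_norm_sub hne₁ (ht₁ y (mem_insert y t)) hδ
    refine ⟨g₂, β₂, hne₂, hsub₂.trans hsub₁, fun z hz y' hy' => ?_⟩
    rcases hy' with rfl | hy'
    · exact hfar₂ z hz
    · exact hfar₁ z (hsub₂ hz) y' hy'

lemma exists_ballSlice_subset_lt_norm_sub_of_isCompact (hX : DaugavetProperty X)
    {g : X →L[ℝ] ℝ} {β : ℝ} (hne : (ballSlice g β).Nonempty) {C : Set X} (hC : IsCompact C)
    (hC₁ : ∀ y ∈ C, ‖y‖ = 1) {δ : ℝ} (hδ : 0 < δ) :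
    ∃ g' β', (ballSlice g' β').Nonempty ∧ ballSlice g' β' ⊆ ballSlice g β ∧
      ∀ z ∈ ballSlice g' β', ∀ y ∈ C, 2 - δ < ‖z - y‖ := by
  obtain ⟨t, htC, ht, hCt⟩ := finite_cover_balls_of_compact hC (half_pos hδ)
  obtain ⟨g', β', hne', hsub', hfar'⟩ := hX.exists_ballSlice_subset_lt_norm_sub_of_finite hne ht
    (fun y hy => hC₁ y (htC hy)) (half_pos hδ)
  refine ⟨g', β', hne', hsub', fun z hz y hy => ?_⟩
  obtain ⟨y', hy't, hyy'⟩ := mem_iUnion₂.1 (hCt hy)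
  rw [Metric.mem_ball, dist_eq_norm] at hyy'
  have := norm_sub_le_norm_sub_add_norm_sub z y y'
  linarith [hfar' z hz y' hy't, norm_sub_rev y y']

lemma exists_ballSlice_subset_lt_norm_sub_inv_norm_smul (hX : DaugavetProperty X)
    {g : X →L[ℝ] ℝ} {β : ℝ} (hne : (ballSlice g β).Nonempty) {K : Set X} (hK : IsCompact K)
    {r : ℝ} (hr : 0 < r) {δ : ℝ} (hδ : 0 < δ) :
    ∃ g' β', (ballSlice g' β').Nonempty ∧ ballSlice g' β' ⊆ ballSlice g β ∧
      ∀ z ∈ ballSlice g' β', ∀ w ∈ K, r ≤ ‖w‖ → 2 - δ < ‖z - ‖w‖⁻¹ • w‖ := by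
  have hK' : IsCompact (K ∩ {w | r ≤ ‖w‖}) :=
    hK.inter_right (isClosed_le continuous_const continuous_norm)
  have hne₀ : ∀ w ∈ K ∩ {w | r ≤ ‖w‖}, w ≠ 0 := fun w hw h => by
    have : r ≤ ‖w‖ := hw.2
    rw [h, norm_zero] at this; linarith
  have hcont : ContinuousOn (fun w : X => ‖w‖⁻¹ • w) (K ∩ {w | r ≤ ‖w‖}) :=
    (continuous_norm.continuousOn.inv₀ fun w hw => norm_ne_zero_iff.2 (hne₀ w hw)).smul
      continuousOn_id
  obtain ⟨g', β', hne', hsub', hfar'⟩ := hX.exists_ballSlice_subset_lt_norm_sub_of_isCompact hne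
    (hK'.image_of_continuousOn hcont) (by
      rintro - ⟨w, hw, rfl⟩
      exact norm_smul_inv_norm (hne₀ w hw)) hδ
  exact ⟨g', β', hne', hsub', fun z hz w hw hrw => hfar' z hz _ ⟨w, ⟨hw, hrw⟩, rfl⟩⟩

lemma exists_seq_lt_norm_sub_inv_norm_smul (hX : DaugavetProperty X) {g₀ : X →L[ℝ] ℝ} {β₀ : ℝ}
    (hne : (ballSlice g₀ β₀).Nonempty) (S : X → X) {r : ℝ} (hr : 0 < r) {δ : ℝ} (hδ : 0 < δ) :
    ∃ x : ℕ → X, (∀ n, x n ∈ ballSlice g₀ β₀) ∧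
      ∀ N, ∀ z ∈ convexHull ℝ (x '' Ici (N + 1)), ∀ w ∈ convexHull ℝ ((S ∘ x) '' Iic N),
        r ≤ ‖w‖ → 2 - δ < ‖z - ‖w‖⁻¹ • w‖ := by
  -- a state `(g, β, x)` is a slice together with a point of it
  obtain ⟨f, -, hf⟩ := exists_seq_of_forall_finite_exists
    (fun p : (X →L[ℝ] ℝ) × ℝ × X => p.2.2 ∈ ballSlice p.1 p.2.1 ∧
      ballSlice p.1 p.2.1 ⊆ ballSlice g₀ β₀)
    (fun p s q => ballSlice q.1 q.2.1 ⊆ ballSlice p.1 p.2.1 ∧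
      ∀ z ∈ ballSlice q.1 q.2.1, ∀ w ∈ convexHull ℝ ((fun p => S p.2.2) '' s),
        r ≤ ‖w‖ → 2 - δ < ‖z - ‖w‖⁻¹ • w‖)
    (a₀ := (g₀, β₀, hne.some)) ⟨hne.some_mem, subset_rfl⟩ (by
      rintro ⟨g, β, x⟩ s ⟨hx, hsub⟩ hs
      obtain ⟨g', β', hne', hsub', hfar'⟩ := hX.exists_ballSlice_subset_lt_norm_sub_inv_norm_smul
        ⟨x, hx⟩ ((hs.image _).isCompact_convexHull ℝ) hr hδ
      exact ⟨(g', β', hne'.some), ⟨hne'.some_mem, hsub'.trans hsub⟩, hsub', hfar'⟩)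
  have hmono : ∀ m n, m ≤ n → ballSlice (f n).1 (f n).2.1 ⊆ ballSlice (f m).1 (f m).2.1 := by
    intro m n hmn
    induction n, hmn using Nat.le_induction with
    | base => exact subset_rfl
    | succ n _ ih => exact (hf n).2.1.trans ih
  refine ⟨fun n => (f n).2.2, fun n => (hf n).1.2 (hf n).1.1, fun N z hz w hw hrw => ?_⟩
  refine (hf N).2.2 z (convexHull_min ?_ (convex_ballSlice _ _) hz) w
    (by rwa [image_image]) hrw
  rintro - ⟨n, hn, rfl⟩
  exact hmono (N + 1) n hn (hf n).1.1

lemma exists_norm_le_one_lt_norm_sub_apply (hX : DaugavetProperty X) {S : X →L[ℝ] X}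
    (hS : WeaklyCompactOp S) {a : ℝ} (ha : 0 < a) (ha₁ : a ≤ 1) (haS : 4 * a ≤ ‖S‖) :
    ∃ z, ‖z‖ ≤ 1 ∧ 1 + ‖S‖ - (5 + ‖S‖) * a < ‖z - S z‖ := by
  obtain ⟨x₀, hx₀, hSx₀⟩ := S.exists_lt_apply_of_lt_opNorm (show ‖S‖ - a < ‖S‖ by linarith)
  obtain ⟨f, hf, hfSx₀⟩ := exists_dual_vector'' ℝ (S x₀)
  rw [RCLike.ofReal_real_eq_id, id] at hfSx₀
  have hx₀S : x₀ ∈ ballSlice (f.comp S) (‖S‖ - a) :=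
    mem_ballSlice.2 ⟨hx₀.le, by rwa [ContinuousLinearMap.comp_apply, hfSx₀]⟩
  obtain ⟨x, hxS, hfar⟩ := hX.exists_seq_lt_norm_sub_inv_norm_smul ⟨x₀, hx₀S⟩ S
    (show 0 < ‖S‖ / 2 by linarith) ha
  have hx : ∀ n, ‖x n‖ ≤ 1 := fun n => (mem_ballSlice.1 (hxS n)).1
  obtain ⟨v, hv⟩ := exists_forall_mem_closure_convexHull_image_Ici hS (u := S ∘ x)
    fun n => subset_closure ⟨S (x n), ⟨x n, mem_closedBall_zero_iff.2 (hx n), rfl⟩, rfl⟩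
  have hfv : ‖S‖ - a ≤ f v := by
    refine closure_minimal (convexHull_min ?_ (convex_halfSpace_ge f.isLinear _))
      (isClosed_le continuous_const f.continuous) (hv 0)
    rintro - ⟨n, -, rfl⟩
    exact (mem_ballSlice.1 (hxS n)).2.le
  have hv_norm : ‖S‖ - a ≤ ‖v‖ :=
    hfv.trans ((apply_le_opNorm_mul_norm f v).trans (mul_le_of_le_one_left (norm_nonneg v) hf))
  -- `v` is approximated by a combination `c₁` of early `S xₙ` and by `S z`, `z` made of late `xₙ`
  obtain ⟨c₁, hc₁, hvc₁⟩ := Metric.mem_closure_iff.1 (hv 0) a ha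
  rw [Ici_zero_eq_univ, image_univ] at hc₁
  obtain ⟨N, hc₁N⟩ := exists_mem_convexHull_image_Iic hc₁
  obtain ⟨c₂, hc₂, hvc₂⟩ := Metric.mem_closure_iff.1 (hv (N + 1)) a ha
  rw [image_comp, ← S.coe_coe, ← LinearMap.image_convexHull] at hc₂
  obtain ⟨z, hz, rfl⟩ := hc₂
  have hz₁ : ‖z‖ ≤ 1 := by
    refine mem_closedBall_zero_iff.1 (convexHull_min ?_ (convex_closedBall 0 1) hz)
    rintro - ⟨n, -, rfl⟩
    exact mem_closedBall_zero_iff.2 (hx n)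
  rw [dist_eq_norm, ContinuousLinearMap.coe_coe] at hvc₂
  rw [dist_eq_norm] at hvc₁
  have hc₁_norm : ‖S‖ - 2 * a < ‖c₁‖ := by linarith [norm_sub_norm_le v c₁]
  have hc₁₀ : c₁ ≠ 0 := norm_pos_iff.1 (by linarith)
  have hzc₁_norm : (1 - a) * (1 + (‖S‖ - 2 * a)) ≤ ‖z - c₁‖ :=
    (mul_le_mul_of_nonneg_left (by linarith) (sub_nonneg.2 ha₁)).trans
      (one_sub_mul_one_add_norm_le_norm_sub hz₁ hc₁₀ ha.le (hfar N z hz c₁ hc₁N (by linarith)))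
  refine ⟨z, hz₁, ?_⟩
  calc 1 + ‖S‖ - (5 + ‖S‖) * a < (1 - a) * (1 + (‖S‖ - 2 * a)) - ‖v - S z‖ - ‖v - c₁‖ := by
        nlinarith
    _ ≤ ‖z - c₁‖ - ‖v - S z‖ - ‖v - c₁‖ := by linarith
    _ ≤ ‖z - S z‖ := by
      have := norm_sub_le_norm_sub_add_norm_sub z (S z) c₁
      have := norm_sub_le_norm_sub_add_norm_sub (S z) v c₁
      linarith [norm_sub_rev (S z) v]

theorem one_add_norm_le_norm_id_sub (hX : DaugavetProperty X) {S : X →L[ℝ] X}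
    (hS : WeaklyCompactOp S) : 1 + ‖S‖ ≤ ‖ContinuousLinearMap.id ℝ X - S‖ := by
  rcases eq_or_ne S 0 with rfl | hS₀
  · simp [hX.norm_id]
  have hS₀ : 0 < ‖S‖ := norm_pos_iff.2 hS₀
  refine le_of_forall_pos_sub_le fun ε hε => ?_
  set a := min (ε / (5 + ‖S‖)) (min 1 (‖S‖ / 4))
  have ha : 0 < a := lt_min (by positivity) (lt_min one_pos (by positivity))
  have haε : (5 + ‖S‖) * a ≤ ε := (le_div_iff₀' (by positivity)).1 (min_le_left _ _)
  have ha₁ : a ≤ 1 := (min_le_right _ _).trans (min_le_left _ _)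
  have haS : a ≤ ‖S‖ / 4 := (min_le_right _ _).trans (min_le_right _ _)
  obtain ⟨z, hz, hzS⟩ := hX.exists_norm_le_one_lt_norm_sub_apply hS ha ha₁ (by linarith)
  calc 1 + ‖S‖ - ε ≤ ‖z - S z‖ := by linarith
    _ = ‖(ContinuousLinearMap.id ℝ X - S) z‖ := rfl
    _ ≤ ‖ContinuousLinearMap.id ℝ X - S‖ :=
      ((ContinuousLinearMap.id ℝ X - S).le_of_opNorm_le_of_le le_rfl hz).trans_eq (mul_one _)

end DaugavetProperty

namespace WeaklyCompactOp

lemma of_isCompact {T : X →L[ℝ] X} {K : Set (WeakSpace ℝ X)} (hK : IsCompact K)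
    (hTK : ∀ x ∈ Metric.closedBall (0 : X) 1, toWeakSpace ℝ X (T x) ∈ K) : WeaklyCompactOp T :=
  hK.closure_of_subset <| by
    rintro - ⟨-, ⟨x, hx, rfl⟩, rfl⟩
    exact hTK x hx

lemma zero : WeaklyCompactOp (0 : X →L[ℝ] X) :=
  of_isCompact isCompact_singleton fun _ _ => map_zero _

lemma add {S T : X →L[ℝ] X} (hS : WeaklyCompactOp S) (hT : WeaklyCompactOp T) :
    WeaklyCompactOp (S + T) :=
  of_isCompact (IsCompact.add hS hT) fun x hx => Set.mem_add.2
    ⟨_, subset_closure ⟨S x, ⟨x, hx, rfl⟩, rfl⟩, _, subset_closure ⟨T x, ⟨x, hx, rfl⟩, rfl⟩,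
      (map_add _ _ _).symm⟩

lemma finset_sum {Γ : Type*} {T : Γ → X →L[ℝ] X} (hT : ∀ n, WeaklyCompactOp (T n))
    (A : Finset Γ) : WeaklyCompactOp (∑ n ∈ A, T n) :=
  Finset.sum_induction T WeaklyCompactOp (fun _ _ => add) zero fun n _ => hT n

lemma smulRight (φ : X →L[ℝ] ℝ) (e : X) : WeaklyCompactOp (φ.smulRight e) := by
  refine of_isCompact ((isCompact_Icc (a := -‖φ‖) (b := ‖φ‖)).image
    ((toWeakSpaceCLM ℝ X).continuous.comp (continuous_id.smul continuous_const)))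
    fun x hx => ⟨φ x, abs_le.1 ?_, rfl⟩
  exact (φ.le_opNorm x).trans
    (mul_le_of_le_one_right (norm_nonneg φ) (mem_closedBall_zero_iff.1 hx))

end WeaklyCompactOp

lemma exists_forall_norm_finset_sum_le [CompleteSpace X] {Γ : Type*} {T : Γ → X →L[ℝ] X}
    (hT : ∀ x, Summable fun n => T n x) : ∃ C, ∀ A : Finset Γ, ‖∑ n ∈ A, T n‖ ≤ C := by
  classical
  refine banach_steinhaus fun x => ?_
  obtain ⟨s, hs⟩ := (hT x).vanishing (Metric.ball_mem_nhds 0 one_pos)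
  refine ⟨1 + ∑ n ∈ s, ‖T n x‖, fun A => ?_⟩
  rw [sum_apply, ← Finset.sum_sdiff (Finset.inter_subset_left : A ∩ s ⊆ A)]
  have htail : ‖∑ n ∈ A \ (A ∩ s), T n x‖ < 1 := by
    simpa using hs (A \ (A ∩ s)) (Finset.disjoint_left.2 fun n hn hns => (Finset.mem_sdiff.1 hn).2
      (Finset.mem_inter.2 ⟨(Finset.mem_sdiff.1 hn).1, hns⟩))
  have hhead : ‖∑ n ∈ A ∩ s, T n x‖ ≤ ∑ n ∈ s, ‖T n x‖ :=
    (norm_sum_le _ _).trans (Finset.sum_le_sum_of_subset_of_nonneg Finset.inter_subset_right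
      fun _ _ _ => norm_nonneg _)
  linarith [norm_add_le (∑ n ∈ A \ (A ∩ s), T n x) (∑ n ∈ A ∩ s, T n x)]

lemma norm_id_sub_finset_sum_le {Γ : Type*} {T : Γ → X →L[ℝ] X}
    (hT : ∀ x, HasSum (fun n => T n x) x) {C : ℝ} (hC : ∀ A : Finset Γ, ‖∑ n ∈ A, T n‖ ≤ C)
    (A : Finset Γ) : ‖ContinuousLinearMap.id ℝ X - ∑ n ∈ A, T n‖ ≤ C := by
  classical
  refine ContinuousLinearMap.opNorm_le_bound _ ((norm_nonneg _).trans (hC ∅)) fun x => ?_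
  -- `x - ∑_A T n x` is the limit of the sums over `B \ A`, `B ⊇ A`
  have hlim : Tendsto (fun B : Finset Γ => ∑ n ∈ B, T n x - ∑ n ∈ A, T n x) atTop
      (𝓝 (x - ∑ n ∈ A, T n x)) := Tendsto.sub_const (hT x) _
  rw [sub_apply, ContinuousLinearMap.id_apply, sum_apply]
  refine le_of_tendsto hlim.norm (eventually_atTop.2 ⟨A, fun B hB => ?_⟩)
  rw [← Finset.sum_sdiff_eq_sub hB, ← sum_apply]
  exact (ContinuousLinearMap.le_opNorm _ _).trans
    (mul_le_mul_of_nonneg_right (hC _) (norm_nonneg x))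

end

/-- if `X` has the Daugavet property, the identity on `X` is not a pointwise
unconditionally convergent series of weakly compact operators; in particular `X` has no
unconditional (Schauder) basis. -/
theorem stmt13 (X : Type*) [NormedAddCommGroup X] [NormedSpace ℝ X] [CompleteSpace X]
    (hX : DaugavetProperty X) :
    (¬ ∃ (Γ : Type) (T : Γ → (X →L[ℝ] X)),
        (∀ n : Γ, WeaklyCompactOp (T n)) ∧ ∀ x : X, HasSum (fun n : Γ => T n x) x) ∧
    (¬ ∃ (e : ℕ → X) (φ : ℕ → (X →L[ℝ] ℝ)),
        (∀ i j : ℕ, φ i (e j) = if i = j then 1 else 0) ∧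
        ∀ x : X, HasSum (fun n : ℕ => φ n x • e n) x) := by
  have hseries : ¬ ∃ (Γ : Type) (T : Γ → (X →L[ℝ] X)),
      (∀ n : Γ, WeaklyCompactOp (T n)) ∧ ∀ x : X, HasSum (fun n : Γ => T n x) x := by
    rintro ⟨Γ, T, hT, hsum⟩
    obtain ⟨C, hC⟩ := exists_forall_norm_finset_sum_le fun x => (hsum x).summable
    have hbdd : BddAbove (range fun A : Finset Γ => ‖∑ n ∈ A, T n‖) := ⟨C, forall_mem_range.2 hC⟩
    -- with `c` the supremum of the norms of the partial sums, `1 + ‖S_A‖ ≤ ‖Id - S_A‖ ≤ c`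
    set c := ⨆ A : Finset Γ, ‖∑ n ∈ A, T n‖
    have hc : ∀ A : Finset Γ, ‖∑ n ∈ A, T n‖ ≤ c - 1 := fun A => by
      linarith [hX.one_add_norm_le_norm_id_sub (WeaklyCompactOp.finset_sum hT A),
        norm_id_sub_finset_sum_le hsum (fun B => le_ciSup hbdd B) A]
    linarith [ciSup_le hc]
  refine ⟨hseries, ?_⟩
  rintro ⟨e, φ, -, hsum⟩
  exact hseries ⟨ℕ, fun n => (φ n).smulRight (e n), fun n => WeaklyCompactOp.smulRight _ _, hsum⟩
end

section
/- Let μ be Lebesgue measure on [0,1] and g ∈ L¹[0,1] with ‖g‖ = 1. The rank-one operator T : L¹[0,1] → L¹[0,1], T(f) = (∫ f dμ) · g, satisfies ‖Id + T‖ = 2 = 1 + ‖T‖. -/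
/-!
If `f ≥ 0` has `∫ f = 1` and is supported on a set `s` carrying little of the mass of `|g|`, then
`f` and `g` barely cancel, so `‖(Id + T) f‖ = ‖f + g‖ ≥ ‖f‖ + ‖g‖ - 2 ∫_s |g| ≈ 2 = 2 ‖f‖`.
In `L¹[0,1]` the sets `[0, δ]` with `δ → 0` do the job, by absolute continuity of the integral.
-/

open MeasureTheory

noncomputable def μ01 : Measure ℝ := volume.restrict (Set.Icc (0:ℝ) 1)

open Set Filter Topology
open scoped ENNReal

namespace MeasureTheory.L1

variable {α : Type*} [MeasurableSpace α] {μ : Measure α} {s : Set α}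

theorem le_norm_add_of_ae_eq_zero_compl {E : Type*} [NormedAddCommGroup E] (f g : Lp E 1 μ)
    (hs : MeasurableSet s) (hf : ∀ᵐ x ∂μ, x ∉ s → f x = 0) :
    ‖f‖ + ‖g‖ - 2 * ∫ x in s, ‖g x‖ ∂μ ≤ ‖f + g‖ := by
  have split (h : Lp E 1 μ) : ‖h‖ = (∫ x in s, ‖h x‖ ∂μ) + ∫ x in sᶜ, ‖h x‖ ∂μ := by
    rw [norm_eq_integral_norm, integral_add_compl hs (integrable_coeFn h).norm]
  have hf_compl : ∫ x in sᶜ, ‖f x‖ ∂μ = 0 :=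
    setIntegral_eq_zero_of_ae_eq_zero <| hf.mono fun x hx hxs => by rw [hx hxs, norm_zero]
  have hfg_compl : ∫ x in sᶜ, ‖(f + g) x‖ ∂μ = ∫ x in sᶜ, ‖g x‖ ∂μ := by
    refine setIntegral_congr_ae hs.compl ?_
    filter_upwards [Lp.coeFn_add f g, hf] with x hfg hfx hxs
    rw [hfg, Pi.add_apply, hfx hxs, zero_add]
  have hfg_s : (∫ x in s, ‖f x‖ ∂μ) - ∫ x in s, ‖g x‖ ∂μ ≤ ∫ x in s, ‖(f + g) x‖ ∂μ := by
    have hfi := (integrable_coeFn f).norm.restrict (s := s)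
    have hgi := (integrable_coeFn g).norm.restrict (s := s)
    rw [← MeasureTheory.integral_sub hfi hgi]
    refine integral_mono_ae (hfi.sub hgi) (integrable_coeFn (f + g)).norm.restrict ?_
    filter_upwards [ae_restrict_of_ae (Lp.coeFn_add f g)] with x hfg
    rw [hfg, Pi.add_apply]
    exact norm_sub_le_norm_add _ _
  linarith [split f, split g, split (f + g)]

theorem integralCLM_apply {E : Type*} [NormedAddCommGroup E] [NormedSpace ℝ E] [CompleteSpace E]
    (f : Lp E 1 μ) : integralCLM f = ∫ x, f x ∂μ :=
  (integral_eq f).symm.trans (integral_eq_integral f)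

noncomputable def normalizedIndicator (hs : MeasurableSet s) (hμs : μ s ≠ ∞) : Lp ℝ 1 μ :=
  indicatorConstLp 1 hs hμs (μ.real s)⁻¹

variable (hs : MeasurableSet s) (hμs₀ : μ s ≠ 0) (hμs : μ s ≠ ∞)
include hs hμs₀ hμs

theorem norm_normalizedIndicator : ‖normalizedIndicator hs hμs‖ = 1 := by
  have : 0 < μ.real s := ENNReal.toReal_pos hμs₀ hμs
  rw [normalizedIndicator, norm_indicatorConstLp one_ne_zero ENNReal.one_ne_top,
    ENNReal.toReal_one, div_one, Real.rpow_one, Real.norm_of_nonneg (inv_nonneg.2 this.le),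
    inv_mul_cancel₀ this.ne']

theorem integral_normalizedIndicator : ∫ x, normalizedIndicator hs hμs x ∂μ = 1 := by
  rw [normalizedIndicator, integral_indicatorConstLp, smul_eq_mul]
  exact mul_inv_cancel₀ (ENNReal.toReal_pos hμs₀ hμs).ne'

theorem norm_integralCLM_eq_one : ‖(integralCLM : Lp ℝ 1 μ →L[ℝ] ℝ)‖ = 1 := by
  refine le_antisymm norm_Integral_le_one ?_
  have := (integralCLM : Lp ℝ 1 μ →L[ℝ] ℝ).le_opNorm (normalizedIndicator hs hμs)
  rwa [integralCLM_apply, integral_normalizedIndicator hs hμs₀ hμs, norm_one,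
    norm_normalizedIndicator hs hμs₀ hμs, mul_one] at this

theorem le_norm_id_add_integralCLM_smulRight (g : Lp ℝ 1 μ) :
    1 + ‖g‖ - 2 * ∫ x in s, ‖g x‖ ∂μ ≤
      ‖ContinuousLinearMap.id ℝ (Lp ℝ 1 μ) + (integralCLM : Lp ℝ 1 μ →L[ℝ] ℝ).smulRight g‖ := by
  set f := normalizedIndicator hs hμs
  set A := ContinuousLinearMap.id ℝ (Lp ℝ 1 μ) + (integralCLM : Lp ℝ 1 μ →L[ℝ] ℝ).smulRight g
  have hf : ‖f‖ = 1 := norm_normalizedIndicator hs hμs₀ hμs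
  have hAf : A f = f + g := by
    rw [add_apply, ContinuousLinearMap.id_apply,
      ContinuousLinearMap.smulRight_apply, integralCLM_apply,
      integral_normalizedIndicator hs hμs₀ hμs, one_smul]
  calc 1 + ‖g‖ - 2 * ∫ x in s, ‖g x‖ ∂μ ≤ ‖f + g‖ := by
        simpa only [hf] using le_norm_add_of_ae_eq_zero_compl f g hs indicatorConstLp_coeFn_notMem
    _ = ‖A f‖ := by rw [hAf]
    _ ≤ ‖A‖ := by simpa only [hf, mul_one] using A.le_opNorm f

end MeasureTheory.L1

theorem μ01_Icc_zero {δ : ℝ} (hδ : δ ≤ 1) : μ01 (Icc 0 δ) = ENNReal.ofReal δ := by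
  rw [μ01, Measure.restrict_apply measurableSet_Icc,
    inter_eq_left.2 (Icc_subset_Icc le_rfl hδ), Real.volume_Icc, sub_zero]

theorem exists_setIntegral_μ01_Icc_zero_lt {f : ℝ → ℝ} (hf : Integrable f μ01) {ε : ℝ}
    (hε : 0 < ε) : ∃ δ ∈ Ioc (0 : ℝ) 1, ∫ x in Icc 0 δ, f x ∂μ01 < ε := by
  have hμ : Tendsto (fun δ => μ01 (Icc 0 δ)) (𝓝[>] 0) (𝓝 0) := by
    have : Tendsto ENNReal.ofReal (𝓝[>] 0) (𝓝 0) :=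
      ENNReal.ofReal_zero ▸ ENNReal.continuous_ofReal.continuousAt.tendsto.mono_left
        nhdsWithin_le_nhds
    refine this.congr' ?_
    filter_upwards [Ioc_mem_nhdsGT one_pos] with δ hδ
    exact (μ01_Icc_zero hδ.2).symm
  have hδ : ∀ᶠ δ in 𝓝[>] (0 : ℝ), δ ∈ Ioc (0 : ℝ) 1 := Ioc_mem_nhdsGT one_pos
  exact (hδ.and ((hf.tendsto_setIntegral_nhds_zero hμ).eventually (gt_mem_nhds hε))).exists

/-- for `g ∈ L¹[0,1]` with `‖g‖ = 1`, the rank-one operator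
`T f = (∫ f dμ) · g` satisfies the Daugavet equation `‖Id + T‖ = 2 = 1 + ‖T‖`. -/
theorem stmt16 (g : Lp ℝ 1 μ01) (hg : ‖g‖ = 1) :
    ‖ContinuousLinearMap.id ℝ (Lp ℝ 1 μ01) +
        (L1.integralCLM : Lp ℝ 1 μ01 →L[ℝ] ℝ).smulRight g‖ = 2 ∧
    ‖(L1.integralCLM : Lp ℝ 1 μ01 →L[ℝ] ℝ).smulRight g‖ = 1 := by
  have hμ01 (δ : ℝ) (hδ : δ ∈ Ioc (0 : ℝ) 1) : μ01 (Icc 0 δ) ≠ 0 ∧ μ01 (Icc 0 δ) ≠ ∞ := by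
    simp [μ01_Icc_zero hδ.2, hδ.1]
  have hT : ‖(L1.integralCLM : Lp ℝ 1 μ01 →L[ℝ] ℝ).smulRight g‖ = 1 := by
    rw [ContinuousLinearMap.norm_smulRight_apply, hg, mul_one,
      L1.norm_integralCLM_eq_one measurableSet_Icc (hμ01 1 ⟨one_pos, le_rfl⟩).1
        (hμ01 1 ⟨one_pos, le_rfl⟩).2]
  refine ⟨le_antisymm ?_ ?_, hT⟩
  · calc _ ≤ ‖ContinuousLinearMap.id ℝ (Lp ℝ 1 μ01)‖ + 1 := hT ▸ norm_add_le _ _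
      _ ≤ 2 := by linarith [ContinuousLinearMap.norm_id_le (𝕜 := ℝ) (E := Lp ℝ 1 μ01)]
  · refine le_of_forall_pos_le_add fun ε hε => ?_
    obtain ⟨δ, hδ, hsmall⟩ :=
      exists_setIntegral_μ01_Icc_zero_lt (L1.integrable_coeFn g).norm (half_pos hε)
    have := L1.le_norm_id_add_integralCLM_smulRight measurableSet_Icc (hμ01 δ hδ).1
      (hμ01 δ hδ).2 g
    linarith
end

section
/- Let X(μ) be an order continuous Banach function space with the Daugavet property. Then the identity map on X(μ), i.e., the integration map of the vector measure A ↦ χ_A, cannot be written as a (possibly uncountable) pointwise unconditionally convergent series of finite rank operators. -/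
/-!
Put `S_F = ∑_{n ∈ F} T_n`. By Banach–Steinhaus `M = sup_F ‖S_F‖` is finite, and since the
partial sums converge pointwise to the identity, `‖Id - 2 S_F‖ ≤ 2M` for every finite `F`. But
`-2 S_F` has finite rank, so the Daugavet equation gives `‖Id - 2 S_F‖ = 1 + 2‖S_F‖`, which is
larger than `2M` as soon as `‖S_F‖ > M - 1/2`.

The Daugavet equation passes from rank-one to finite-rank operators `T = j ∘ F` with
`F : X → E`, `E` a finite-dimensional inner product space: a maximiser `p` of
`ℓ + (s/2)‖·‖²` on `F(B_X)`, for `ℓ` coming from a norming functional of `T` and small `s`,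
is strongly exposed, so `T` is almost equal to `j p` on a slice of `B_X`, where `‖j p‖` is almost
`‖T‖`. The rank-one Daugavet equation produces, in every slice of `B_X`, a point `y` with
`‖y + j p / ‖j p‖‖` almost `2`, whence `‖y + T y‖` is almost `1 + ‖T‖`.
-/

open Metric

section NormedSpace

variable {X : Type*} [NormedAddCommGroup X] [NormedSpace ℝ X]

theorem exists_norm_eq_one_and_eq_norm_smul [Nontrivial X] (k : X) :
    ∃ x : X, ‖x‖ = 1 ∧ k = ‖k‖ • x := by
  rcases eq_or_ne k 0 with rfl | hk
  · obtain ⟨x, hx⟩ := exists_norm_eq X zero_le_one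
    exact ⟨x, hx, by simp⟩
  · refine ⟨‖k‖⁻¹ • k, norm_smul_inv_norm hk, ?_⟩
    rw [smul_inv_smul₀ (norm_ne_zero_iff.mpr hk)]

theorem mul_norm_add_sub_one_le_norm_add_smul {x y : X} (hx : ‖x‖ = 1) (hy : ‖y‖ ≤ 1)
    {a : ℝ} (ha : 0 ≤ a) : (1 + a) * (‖x + y‖ - 1) ≤ ‖y + a • x‖ := by
  have hxy : ‖x + y‖ ≤ 2 := (norm_add_le x y).trans (by linarith)
  rcases le_total a 1 with h | h
  · have : ‖x + y‖ ≤ ‖y + a • x‖ + (1 - a) := by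
      calc ‖x + y‖ = ‖(y + a • x) + (1 - a) • x‖ := by congr 1; module
        _ ≤ ‖y + a • x‖ + ‖(1 - a) • x‖ := norm_add_le _ _
        _ = ‖y + a • x‖ + (1 - a) := by
            rw [norm_smul, hx, Real.norm_of_nonneg (by linarith), mul_one]
    nlinarith
  · have : a * ‖x + y‖ ≤ ‖y + a • x‖ + (a - 1) := by
      calc a * ‖x + y‖ = ‖(y + a • x) + (a - 1) • y‖ := by
            rw [← Real.norm_of_nonneg ha, ← norm_smul, Real.norm_of_nonneg ha]; congr 1; module
        _ ≤ ‖y + a • x‖ + ‖(a - 1) • y‖ := norm_add_le _ _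
        _ ≤ ‖y + a • x‖ + (a - 1) := by
            rw [norm_smul, Real.norm_of_nonneg (by linarith)]
            nlinarith
    nlinarith

end NormedSpace

theorem LinearMap.finiteDimensional_range_sum {K M N ι : Type*} [Field K] [AddCommGroup M]
    [Module K M] [AddCommGroup N] [Module K N] (s : Finset ι) (f : ι → M →ₗ[K] N)
    (hf : ∀ i ∈ s, FiniteDimensional K (LinearMap.range (f i))) :
    FiniteDimensional K (LinearMap.range (∑ i ∈ s, f i)) := by
  classical
  induction s using Finset.induction_on with
  | empty => rw [Finset.sum_empty, LinearMap.range_zero]; infer_instance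
  | insert i s hi ih =>
    rw [Finset.sum_insert hi]
    have := hf i (Finset.mem_insert_self i s)
    have := ih fun j hj => hf j (Finset.mem_insert_of_mem hj)
    exact Submodule.finiteDimensional_of_le (LinearMap.range_add_le _ _)

theorem HasSum.exists_forall_norm_sum_le {ι E : Type*} [SeminormedAddCommGroup E] {f : ι → E}
    {a : E} (hf : HasSum f a) : ∃ C, ∀ s : Finset ι, ‖∑ i ∈ s, f i‖ ≤ C := by
  classical
  obtain ⟨t, ht⟩ := cauchySeq_finset_iff_vanishing_norm.1 hf.cauchySeq 1 one_pos
  refine ⟨∑ i ∈ t, ‖f i‖ + 1, fun s => ?_⟩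
  rw [← Finset.sum_inter_add_sum_sdiff s t]
  refine (norm_add_le _ _).trans (add_le_add ?_ (ht _ Finset.sdiff_disjoint).le)
  exact (norm_sum_le _ _).trans
    (Finset.sum_le_sum_of_subset_of_nonneg Finset.inter_subset_right fun _ _ _ => norm_nonneg _)

theorem ContinuousLinearMap.exists_eq_comp_euclideanSpace {X Y : Type*} [NormedAddCommGroup X]
    [NormedSpace ℝ X] [NormedAddCommGroup Y] [NormedSpace ℝ Y] (T : X →L[ℝ] Y)
    (hT : FiniteDimensional ℝ (LinearMap.range (T : X →ₗ[ℝ] Y))) :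
    ∃ (n : ℕ) (F : X →L[ℝ] EuclideanSpace ℝ (Fin n)) (j : EuclideanSpace ℝ (Fin n) →L[ℝ] Y),
      T = j ∘L F := by
  set V := LinearMap.range (T : X →ₗ[ℝ] Y)
  let e : V ≃L[ℝ] EuclideanSpace ℝ (Fin (Module.finrank ℝ V)) :=
    ContinuousLinearEquiv.ofFinrankEq (by simp)
  refine ⟨_, e.toContinuousLinearMap ∘L T.codRestrict V (LinearMap.mem_range_self _),
    V.subtypeL ∘L e.symm.toContinuousLinearMap, ?_⟩
  ext x
  simp

theorem norm_id_sub_two_smul_sum_le {X Γ : Type*} [NormedAddCommGroup X] [NormedSpace ℝ X]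
    {T : Γ → X →L[ℝ] X} (hT : ∀ x : X, HasSum (fun n => T n x) x) {M : ℝ}
    (hM : ∀ s : Finset Γ, ‖∑ n ∈ s, T n‖ ≤ M) (s : Finset Γ) :
    ‖ContinuousLinearMap.id ℝ X - (2 : ℝ) • ∑ n ∈ s, T n‖ ≤ 2 * M := by
  classical
  have hM0 : 0 ≤ M := (norm_nonneg _).trans (hM ∅)
  refine ContinuousLinearMap.opNorm_le_bound _ (by positivity) fun x => ?_
  have hlim := ((hT x).sub_const ((2 : ℝ) • (∑ n ∈ s, T n) x)).norm
  refine le_of_tendsto hlim (Filter.eventually_atTop.2 ⟨s, fun t hst => ?_⟩)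
  calc ‖∑ n ∈ t, T n x - (2 : ℝ) • (∑ n ∈ s, T n) x‖
      = ‖(∑ n ∈ t \ s, T n) x - (∑ n ∈ s, T n) x‖ := by
        rw [← Finset.sum_sdiff hst]
        simp only [sum_apply]
        congr 1
        module
    _ ≤ M * ‖x‖ + M * ‖x‖ := (norm_sub_le _ _).trans (add_le_add
        ((ContinuousLinearMap.le_opNorm _ _).trans (by gcongr; exact hM _))
        ((ContinuousLinearMap.le_opNorm _ _).trans (by gcongr; exact hM _)))
    _ = 2 * M * ‖x‖ := by ring

theorem half_mul_norm_sub_sq_le_of_le {E : Type*} [NormedAddCommGroup E]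
    [InnerProductSpace ℝ E] (ℓ : E →L[ℝ] ℝ) (s : ℝ) {p w : E}
    (h : ℓ w + s / 2 * ‖w‖ ^ 2 ≤ ℓ p + s / 2 * ‖p‖ ^ 2) :
    s / 2 * ‖w - p‖ ^ 2 ≤ (ℓ p + s * inner ℝ p p) - (ℓ w + s * inner ℝ p w) := by
  rw [norm_sub_sq_real, real_inner_self_eq_norm_sq, real_inner_comm]
  linarith

theorem exists_slice_image_subset_ball {X E : Type*} [NormedAddCommGroup X] [NormedSpace ℝ X]
    [NormedAddCommGroup E] [InnerProductSpace ℝ E] [FiniteDimensional ℝ E]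
    (F : X →L[ℝ] E) (ℓ : E →L[ℝ] ℝ) {η δ : ℝ} (hη : 0 < η) (hδ : 0 < δ) :
    ∃ p : E, (∀ x : X, ‖x‖ ≤ 1 → ℓ (F x) ≤ ℓ p + η) ∧
      ∃ (Φ : X →L[ℝ] ℝ) (β : ℝ), β < ‖Φ‖ ∧ ∀ x : X, ‖x‖ ≤ 1 → β < Φ x → ‖F x - p‖ < δ := by
  set B := F '' closedBall 0 1
  have hB : B ⊆ closedBall 0 ‖F‖ := by
    rintro _ ⟨x, hx, rfl⟩
    exact mem_closedBall_zero_iff.mpr (F.unit_le_opNorm x (mem_closedBall_zero_iff.mp hx))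
  have hK : IsCompact (closure B) := (isBounded_closedBall.subset hB).isCompact_closure
  set s := 2 * η / (‖F‖ ^ 2 + 1)
  have hs : 0 < s := by positivity
  obtain ⟨p, hpK, hmax⟩ := hK.exists_isMaxOn
    ((nonempty_closedBall.mpr zero_le_one).image F).closure
    (f := fun w => ℓ w + s / 2 * ‖w‖ ^ 2) (by fun_prop)
  have hmaxB : ∀ w ∈ B, ℓ w + s / 2 * ‖w‖ ^ 2 ≤ ℓ p + s / 2 * ‖p‖ ^ 2 :=
    fun w hw => hmax (subset_closure hw)
  have hp : ‖p‖ ≤ ‖F‖ := mem_closedBall_zero_iff.mp (closure_minimal hB isClosed_closedBall hpK)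
  -- `v` exposes `p` strongly, by `half_mul_norm_sub_sq_le_of_le`
  set v : E →L[ℝ] ℝ := ℓ + s • innerSL ℝ p
  have hv : ∀ w, v w = ℓ w + s * inner ℝ p w := fun w => by simp [v]
  refine ⟨p, fun x hx => ?_, v ∘L F, v p - s / 2 * δ ^ 2, ?_, fun x hx hβx => ?_⟩
  · have hFx := hmaxB (F x) ⟨x, mem_closedBall_zero_iff.mpr hx, rfl⟩
    have hsF : s / 2 * ‖p‖ ^ 2 ≤ η := by
      calc s / 2 * ‖p‖ ^ 2 ≤ s / 2 * (‖F‖ ^ 2 + 1) := by gcongr; nlinarith [norm_nonneg p]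
        _ = η := by simp only [s]; field_simp
    linarith [mul_nonneg hs.le (sq_nonneg ‖F x‖)]
  · have hvp : v p ≤ ‖v ∘L F‖ := by
      refine closure_minimal ?_ (isClosed_le v.continuous continuous_const) hpK
      rintro _ ⟨x, hx, rfl⟩
      exact (le_abs_self _).trans ((v ∘L F).unit_le_opNorm x (mem_closedBall_zero_iff.mp hx))
    linarith [mul_pos hs (pow_pos hδ 2)]
  · have hFx := half_mul_norm_sub_sq_le_of_le ℓ s
      (hmaxB (F x) ⟨x, mem_closedBall_zero_iff.mpr hx, rfl⟩)
    rw [← hv, ← hv] at hFx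
    have : s / 2 * ‖F x - p‖ ^ 2 < s / 2 * δ ^ 2 := by
      change v p - s / 2 * δ ^ 2 < v (F x) at hβx
      linarith
    exact lt_of_pow_lt_pow_left₀ 2 hδ.le (lt_of_mul_lt_mul_left this (by positivity))

namespace DaugavetProperty

variable {X : Type*} [NormedAddCommGroup X] [NormedSpace ℝ X]

theorem nontrivial (hX : DaugavetProperty X) : Nontrivial X := by
  by_contra h
  rw [not_nontrivial_iff_subsingleton] at h
  simpa [Subsingleton.elim (ContinuousLinearMap.id ℝ X) 0] using hX 0 0

theorem exists_mem_slice_lt_norm_add_of_norm_eq_one (hX : DaugavetProperty X)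
    {φ : X →L[ℝ] ℝ} (hφ : ‖φ‖ = 1) {x : X} (hx : ‖x‖ = 1) {β ε : ℝ} (hβ : β < 1)
    (hε : 0 < ε) : ∃ y : X, ‖y‖ ≤ 1 ∧ β < φ y ∧ 2 - ε < ‖x + y‖ := by
  set η := min (1 - β) (ε / 2)
  have hη : 0 < η := lt_min (by linarith) (by linarith)
  have hnorm : ‖ContinuousLinearMap.id ℝ X + φ.smulRight x‖ = 2 := by
    rw [hX, ContinuousLinearMap.norm_smulRight_apply, hφ, hx]; norm_num
  obtain ⟨z, hz, hφz, hlt⟩ : ∃ z : X, ‖z‖ ≤ 1 ∧ 0 ≤ φ z ∧ 2 - η < ‖z + φ z • x‖ := by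
    obtain ⟨z, hz, hlt⟩ :=
      (ContinuousLinearMap.id ℝ X + φ.smulRight x).exists_lt_apply_of_lt_opNorm
        (r := 2 - η) (by linarith)
    simp only [add_apply, ContinuousLinearMap.id_apply,
      ContinuousLinearMap.smulRight_apply] at hlt
    rcases le_total 0 (φ z) with h | h
    · exact ⟨z, hz.le, h, hlt⟩
    · refine ⟨-z, by simpa using hz.le, by simpa using h, ?_⟩
      rwa [map_neg, neg_smul, ← neg_add, norm_neg]
  have hφz_le : φ z ≤ 1 := (le_abs_self _).trans (by simpa [hφ] using φ.unit_le_opNorm z hz)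
  have hlt' : ‖z + φ z • x‖ ≤ 1 + φ z := by
    calc ‖z + φ z • x‖ ≤ ‖z‖ + ‖φ z • x‖ := norm_add_le _ _
      _ ≤ 1 + φ z := by rw [norm_smul, hx, Real.norm_of_nonneg hφz, mul_one]; linarith
  have hxz : ‖z + φ z • x‖ ≤ ‖x + z‖ + (1 - φ z) := by
    calc ‖z + φ z • x‖ = ‖(x + z) - (1 - φ z) • x‖ := by congr 1; module
      _ ≤ ‖x + z‖ + ‖(1 - φ z) • x‖ := norm_sub_le _ _
      _ = ‖x + z‖ + (1 - φ z) := by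
          rw [norm_smul, hx, Real.norm_of_nonneg (by linarith), mul_one]
  refine ⟨z, hz, ?_, ?_⟩ <;>
    linarith [min_le_left (1 - β) (ε / 2), min_le_right (1 - β) (ε / 2)]

theorem exists_mem_slice_lt_norm_add (hX : DaugavetProperty X) (φ : X →L[ℝ] ℝ) {x : X}
    (hx : ‖x‖ = 1) {β ε : ℝ} (hβ : β < ‖φ‖) (hε : 0 < ε) :
    ∃ y : X, ‖y‖ ≤ 1 ∧ β < φ y ∧ 2 - ε < ‖x + y‖ := by
  rcases eq_or_ne φ 0 with rfl | hφ
  · refine ⟨x, hx.le, by simpa using hβ, ?_⟩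
    rw [← two_smul ℝ x, norm_smul, hx]
    norm_num [hε]
  have hφpos : 0 < ‖φ‖ := norm_pos_iff.mpr hφ
  obtain ⟨y, hy, hβy, hxy⟩ := hX.exists_mem_slice_lt_norm_add_of_norm_eq_one
    (norm_smul_inv_norm (𝕜 := ℝ) hφ) hx ((div_lt_one hφpos).mpr hβ) hε
  refine ⟨y, hy, ?_, hxy⟩
  simp only [smul_apply, smul_eq_mul, RCLike.ofReal_real_eq_id, id, inv_mul_eq_div] at hβy
  exact (div_lt_div_iff_of_pos_right hφpos).mp hβy

theorem one_add_norm_sub_le_norm_id_add (hX : DaugavetProperty X) (T : X →L[ℝ] X) (k : X)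
    (Φ : X →L[ℝ] ℝ) {β δ : ℝ} (hβ : β < ‖Φ‖)
    (hT : ∀ x : X, ‖x‖ ≤ 1 → β < Φ x → ‖T x - k‖ ≤ δ) :
    1 + ‖k‖ - δ ≤ ‖ContinuousLinearMap.id ℝ X + T‖ := by
  have := hX.nontrivial
  obtain ⟨u, hu, hk⟩ := exists_norm_eq_one_and_eq_norm_smul k
  refine le_of_forall_pos_le_add fun ε hε => ?_
  have hk1 : 0 < 1 + ‖k‖ := by positivity
  obtain ⟨y, hy, hβy, huy⟩ := hX.exists_mem_slice_lt_norm_add Φ hu hβ (div_pos hε hk1)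
  have hyk : 1 + ‖k‖ - ε ≤ ‖y + k‖ := by
    calc 1 + ‖k‖ - ε = (1 + ‖k‖) * (1 - ε / (1 + ‖k‖)) := by field_simp
      _ ≤ (1 + ‖k‖) * (‖u + y‖ - 1) := mul_le_mul_of_nonneg_left (by linarith) hk1.le
      _ ≤ ‖y + ‖k‖ • u‖ := mul_norm_add_sub_one_le_norm_add_smul hu hy (norm_nonneg k)
      _ = ‖y + k‖ := by rw [← hk]
  have hyTy : ‖y + k‖ ≤ ‖y + T y‖ + δ := by
    calc ‖y + k‖ = ‖(y + T y) - (T y - k)‖ := by congr 1; abel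
      _ ≤ ‖y + T y‖ + ‖T y - k‖ := norm_sub_le _ _
      _ ≤ ‖y + T y‖ + δ := by gcongr; exact hT y hy hβy
  have hId : ‖y + T y‖ ≤ ‖ContinuousLinearMap.id ℝ X + T‖ :=
    (ContinuousLinearMap.id ℝ X + T).unit_le_opNorm y hy
  linarith

theorem le_norm_id_add_comp {E : Type*} [NormedAddCommGroup E] [InnerProductSpace ℝ E]
    [FiniteDimensional ℝ E] (hX : DaugavetProperty X) (F : X →L[ℝ] E) (j : E →L[ℝ] X) :
    1 + ‖j ∘L F‖ ≤ ‖ContinuousLinearMap.id ℝ X + j ∘L F‖ := by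
  set T := j ∘L F
  refine le_of_forall_pos_le_add fun ε hε => ?_
  obtain ⟨x₁, hx₁, hTx₁⟩ := T.exists_lt_apply_of_lt_opNorm (r := ‖T‖ - ε / 3) (by linarith)
  obtain ⟨ψ, hψ, hψx₁⟩ := exists_dual_vector'' ℝ (T x₁)
  have hδ : 0 < ε / 3 / (‖j‖ + 1) := by positivity
  obtain ⟨p, hp, Φ, β, hβ, hslice⟩ :=
    exists_slice_image_subset_ball F (ψ ∘L j) (by positivity : 0 < ε / 3) hδ
  have hjp : ‖T‖ - 2 * ε / 3 ≤ ‖j p‖ := by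
    have h₁ : ψ (T x₁) ≤ ψ (j p) + ε / 3 := hp x₁ hx₁.le
    have h₂ : ψ (j p) ≤ ‖j p‖ :=
      (le_abs_self _).trans ((ψ.le_opNorm _).trans (mul_le_of_le_one_left (norm_nonneg _) hψ))
    simp only [hψx₁, RCLike.ofReal_real_eq_id, id] at h₁
    linarith
  have hTk : ∀ x : X, ‖x‖ ≤ 1 → β < Φ x → ‖T x - j p‖ ≤ ε / 3 := by
    intro x hx hβx
    calc ‖T x - j p‖ = ‖j (F x - p)‖ := by rw [map_sub]; rfl
      _ ≤ ‖j‖ * (ε / 3 / (‖j‖ + 1)) :=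
          (j.le_opNorm _).trans (by gcongr; exact (hslice x hx hβx).le)
      _ ≤ ε / 3 := by
          rw [mul_div_assoc']
          exact div_le_of_le_mul₀ (by positivity) (by positivity) (by nlinarith)
  linarith [hX.one_add_norm_sub_le_norm_id_add T (j p) Φ hβ hTk]

theorem norm_id_add_of_finiteDimensional_range (hX : DaugavetProperty X) (T : X →L[ℝ] X)
    (hT : FiniteDimensional ℝ (LinearMap.range (T : X →ₗ[ℝ] X))) :
    ‖ContinuousLinearMap.id ℝ X + T‖ = 1 + ‖T‖ := by
  obtain ⟨n, F, j, rfl⟩ := T.exists_eq_comp_euclideanSpace hT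
  refine le_antisymm ((norm_add_le _ _).trans ?_) (hX.le_norm_id_add_comp F j)
  gcongr
  exact ContinuousLinearMap.norm_id_le

end DaugavetProperty

/-- if `X(μ)` is a(n order continuous) Banach function space with the Daugavet
property, then the identity map on `X(μ)` — the integration map of the vector measure
`A ↦ χ_A` — cannot be written as a (possibly uncountable) pointwise unconditionally
convergent series of finite rank operators. (Stated for an arbitrary Banach space `X` with
the Daugavet property, of which the order continuous Banach function space situation is a
particular instance.) -/
theorem stmt18 (X : Type*) [NormedAddCommGroup X] [NormedSpace ℝ X] [CompleteSpace X]
    (hX : DaugavetProperty X) :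
    ¬ ∃ (Γ : Type) (T : Γ → (X →L[ℝ] X)),
        (∀ n : Γ, FiniteDimensional ℝ (LinearMap.range ((T n) : X →ₗ[ℝ] X))) ∧
        ∀ x : X, HasSum (fun n : Γ => T n x) x := by
  rintro ⟨Γ, T, hfin, hsum⟩
  have hbdd : BddAbove (Set.range fun s : Finset Γ => ‖∑ n ∈ s, T n‖) := by
    obtain ⟨C, hC⟩ := banach_steinhaus (g := fun s : Finset Γ => ∑ n ∈ s, T n) fun x => by
      simpa only [sum_apply] using (hsum x).exists_forall_norm_sum_le
    exact ⟨C, Set.forall_mem_range.2 hC⟩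
  obtain ⟨s, hs⟩ := exists_lt_of_lt_ciSup (sub_lt_self (⨆ s : Finset Γ, ‖∑ n ∈ s, T n‖)
    (by norm_num : (0 : ℝ) < 1 / 2))
  have hrank : FiniteDimensional ℝ
      (LinearMap.range ((-((2 : ℝ) • ∑ n ∈ s, T n) : X →L[ℝ] X) : X →ₗ[ℝ] X)) := by
    have := LinearMap.finiteDimensional_range_sum s (fun n => (T n : X →ₗ[ℝ] X))
      fun n _ => hfin n
    refine Submodule.finiteDimensional_of_le (le_trans ?_
      (LinearMap.range_smul_le_range (∑ n ∈ s, (T n : X →ₗ[ℝ] X)) (2 : ℝ)))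
    simp [LinearMap.range_neg]
  have hdaugavet := hX.norm_id_add_of_finiteDimensional_range _ hrank
  have hupper := norm_id_sub_two_smul_sum_le hsum (fun s => le_ciSup hbdd s) s
  rw [← sub_eq_add_neg, norm_neg, norm_smul, Real.norm_two] at hdaugavet
  linarith
end
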